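/- arXiv:2009.02475 — 4 statements merged into one kernel-verified Lean document; each statement's English description precedes it below -/
import Mathlib

section
/- Let n ≥ 2, let M be a universal n-linear order, let m ∈ {1, …, n}, and let g ∈ Aut(M) with g ≠ id. Then the normal closure of {g} in Aut(M) contains an element having a single +-orbital with respect to <_m, and also contains an element having a single −-orbital with respect to <_m. -/
/-- A set `M` equipped with `n` linear orders `<_1, …, <_n`. -/
structure NLinear (n : ℕ) (M : Type*) where
  lt : Fin n → M → M → Prop
  irrefl : ∀ i a, ¬ lt i a a
  trans : ∀ i a b c, lt i a b → lt i b c → lt i a c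
  total : ∀ i a b, lt i a b ∨ a = b ∨ lt i b a

/-- `M` with its `n` linear orders is a universal `n`-linear order: it is countably
infinite and has the one-point extension property. -/
structure IsUniversalNLinear (n : ℕ) (M : Type*) (L : NLinear n M) : Prop where
  countable : Countable M
  infinite : Infinite M
  extension : ∀ (A : Finset M) (D : Fin n → Set M),
    (∀ i, D i ⊆ ↑A) →
    (∀ i, ∀ a ∈ A, ∀ b ∈ A, L.lt i a b → b ∈ D i → a ∈ D i) →
    ∃ x, x ∉ A ∧ ∀ i, ∀ a ∈ A, (L.lt i a x ↔ a ∈ D i)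

/-- The automorphism group of an `n`-linearly ordered set, as a subgroup of `Equiv.Perm M`. -/
def NLinear.aut {n : ℕ} {M : Type*} (L : NLinear n M) : Subgroup (Equiv.Perm M) where
  carrier := {g | ∀ i a b, L.lt i a b ↔ L.lt i (g a) (g b)}
  one_mem' := fun _ _ _ => Iff.rfl
  mul_mem' := by
    intro g h hg hh i a b
    exact (hh i a b).trans (hg i (h a) (h b))
  inv_mem' := by
    intro g hg i a b
    simpa using (hg i (g⁻¹ a) (g⁻¹ b)).symm


/-- `f` has a single `+`-orbital with respect to `<_m`. -/
def NLinear.SinglePlus {n : ℕ} {M : Type*} (L : NLinear n M) (m : Fin n)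
    (f : Equiv.Perm M) : Prop :=
  ∃ a : M, L.lt m a (f a) ∧ (∀ x : M, ∃ k : ℤ, L.lt m x ((f ^ k) a)) ∧
    (∀ x : M, ∃ k : ℤ, L.lt m ((f ^ k) a) x)

/-- `f` has a single `−`-orbital with respect to `<_m`. -/
def NLinear.SingleMinus {n : ℕ} {M : Type*} (L : NLinear n M) (m : Fin n)
    (f : Equiv.Perm M) : Prop :=
  ∃ a : M, L.lt m (f a) a ∧ (∀ x : M, ∃ k : ℤ, L.lt m x ((f ^ k) a)) ∧
    (∀ x : M, ∃ k : ℤ, L.lt m ((f ^ k) a) x)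

/-- `f` has a `+`-orbital unbounded above with respect to `<_m`. -/
def NLinear.PlusUnbAbove {n : ℕ} {M : Type*} (L : NLinear n M) (m : Fin n)
    (f : Equiv.Perm M) : Prop :=
  ∃ a : M, L.lt m a (f a) ∧ ∀ x : M, ∃ k : ℤ, L.lt m x ((f ^ k) a)

/-- `f` has a `−`-orbital unbounded below with respect to `<_m`. -/
def NLinear.MinusUnbBelow {n : ℕ} {M : Type*} (L : NLinear n M) (m : Fin n)
    (f : Equiv.Perm M) : Prop :=
  ∃ b : M, L.lt m (f b) b ∧ ∀ x : M, ∃ k : ℤ, L.lt m ((f ^ k) b) x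

section Basics


variable {n : ℕ} {M : Type*} (L : NLinear n M)

lemma NLinear.asymm {i : Fin n} {a b : M} (h : L.lt i a b) : ¬ L.lt i b a :=
  fun h' => L.irrefl i a (L.trans i a b a h h')

lemma NLinear.ne_of_lt {i : Fin n} {a b : M} (h : L.lt i a b) : a ≠ b := by
  rintro rfl; exact L.irrefl i a h

lemma NLinear.lt_of_ne_of_not_lt {i : Fin n} {a b : M} (hne : a ≠ b)
    (h : ¬ L.lt i a b) : L.lt i b a := by
  rcases L.total i a b with h1 | h1 | h1
  · exact absurd h1 h
  · exact absurd h1 hne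
  · exact h1

lemma NLinear.aut_iff {h : Equiv.Perm M} (hh : h ∈ L.aut) :
    ∀ i a b, L.lt i a b ↔ L.lt i (h a) (h b) := hh

lemma NLinear.aut_inv_mem {h : Equiv.Perm M} (hh : h ∈ L.aut) : h⁻¹ ∈ L.aut :=
  L.aut.inv_mem hh

/-- Flip the `m`-th order. -/
def NLinear.flipAt (m : Fin n) : NLinear n M where
  lt i a b := if i = m then L.lt i b a else L.lt i a b
  irrefl i a := by by_cases h : i = m <;> simp [h, L.irrefl]
  trans i a b c := by
    by_cases h : i = m
    · simp only [if_pos h]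
      exact fun h1 h2 => L.trans i c b a h2 h1
    · simp only [if_neg h]
      exact L.trans i a b c
  total i a b := by
    by_cases h : i = m
    · simp only [if_pos h]
      rcases L.total i a b with h1 | h1 | h1
      · right; right; exact h1
      · right; left; exact h1
      · left; exact h1
    · simpa only [if_neg h] using L.total i a b

lemma NLinear.flipAt_lt_m (m : Fin n) (a b : M) :
    (L.flipAt m).lt m a b ↔ L.lt m b a := by simp [NLinear.flipAt]

lemma NLinear.flipAt_lt_ne (m : Fin n) {i : Fin n} (hi : i ≠ m) (a b : M) :
    (L.flipAt m).lt i a b ↔ L.lt i a b := by simp [NLinear.flipAt, hi]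

lemma NLinear.flipAt_aut (m : Fin n) : (L.flipAt m).aut = L.aut := by
  ext h
  constructor <;> intro hh i a b
  · by_cases hi : i = m
    · subst hi
      have := hh i b a
      simpa [NLinear.flipAt] using this
    · have := hh i a b
      simpa [NLinear.flipAt, hi] using this
  · by_cases hi : i = m
    · subst hi
      have := hh i b a
      simpa [NLinear.flipAt] using this
    · have := hh i a b
      simpa [NLinear.flipAt, hi] using this

lemma IsUniversalNLinear.flipAt {L : NLinear n M} (hL : IsUniversalNLinear n M L)
    (m : Fin n) : IsUniversalNLinear n M (L.flipAt m) := by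
  refine ⟨hL.countable, hL.infinite, ?_⟩
  intro A D hsub hdc
  classical
  set D' : Fin n → Set M := fun i => if i = m then (↑A : Set M) \ D m else D i with hD'
  have hsub' : ∀ i, D' i ⊆ ↑A := by
    intro i
    by_cases hi : i = m
    · simp only [D', if_pos hi]; exact Set.diff_subset
    · simpa only [D', if_neg hi] using hsub i
  have hdc' : ∀ i, ∀ a ∈ A, ∀ b ∈ A, L.lt i a b → b ∈ D' i → a ∈ D' i := by
    intro i a ha b hb hab hbD
    by_cases hi : i = m
    · simp only [D', if_pos hi] at hbD ⊢
      refine ⟨ha, fun haD => ?_⟩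
      have hflip : (L.flipAt m).lt m b a := by
        rw [L.flipAt_lt_m]; rw [hi] at hab; exact hab
      have : b ∈ D m := by
        have h2 := hdc m b hb a ha hflip haD
        exact h2
      exact hbD.2 this
    · simp only [D', if_neg hi] at hbD ⊢
      have hflip : (L.flipAt m).lt i a b := by
        rw [L.flipAt_lt_ne m hi]; exact hab
      exact hdc i a ha b hb hflip hbD
  obtain ⟨x, hx, hxp⟩ := hL.extension A D' hsub' hdc'
  refine ⟨x, hx, ?_⟩
  intro i a ha
  by_cases hi : i = m
  · subst hi
    rw [L.flipAt_lt_m]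
    have h1 := hxp i a ha
    simp only [D', if_pos rfl] at h1
    constructor
    · intro hxa
      by_contra haD
      have : L.lt i a x := h1.mpr ⟨ha, haD⟩
      exact L.asymm this hxa
    · intro haD
      have hnot : ¬ L.lt i a x := fun h => ((h1.mp h).2 haD)
      have hne : a ≠ x := fun h => hx (h ▸ ha)
      exact L.lt_of_ne_of_not_lt hne hnot
  · rw [L.flipAt_lt_ne m hi]
    have h1 := hxp i a ha
    simpa only [D', if_neg hi] using h1

end Basics
section Place

variable {n : ℕ} {M : Type*} (L : NLinear n M)

/-- A finite partial isomorphism, given as a list of (source, image) pairs. -/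
def IsoList (F : List (M × M)) : Prop :=
  ∀ p ∈ F, ∀ q ∈ F, ∀ i, L.lt i p.1 q.1 ↔ L.lt i p.2 q.2

variable {L}

lemma IsoList.sub {F F' : List (M × M)} (h : IsoList L F) (hs : F' ⊆ F) :
    IsoList L F' := fun p hp q hq i => h p (hs hp) q (hs hq) i

lemma IsoList.snd_eq (m : Fin n) {F : List (M × M)} (h : IsoList L F)
    {p q : M × M} (hp : p ∈ F) (hq : q ∈ F) (h1 : p.1 = q.1) : p.2 = q.2 := by
  have h2 := h p hp q hq m
  have h3 := h q hq p hp m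
  rcases L.total m p.2 q.2 with hl | hl | hl
  · exact absurd (h2.mpr hl) (h1 ▸ L.irrefl m q.1)
  · exact hl
  · exact absurd (h3.mpr hl) (h1 ▸ L.irrefl m q.1)

lemma IsoList.fst_eq (m : Fin n) {F : List (M × M)} (h : IsoList L F)
    {p q : M × M} (hp : p ∈ F) (hq : q ∈ F) (h1 : p.2 = q.2) : p.1 = q.1 := by
  have h2 := h p hp q hq m
  have h3 := h q hq p hp m
  rcases L.total m p.1 q.1 with hl | hl | hl
  · exact absurd (h2.mp hl) (h1 ▸ L.irrefl m q.2)
  · exact hl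
  · exact absurd (h3.mp hl) (h1 ▸ L.irrefl m q.2)

lemma IsoList.flipAt (m : Fin n) {F : List (M × M)} (h : IsoList L F) :
    IsoList (L.flipAt m) F := by
  intro p hp q hq i
  by_cases hi : i = m
  · subst hi
    rw [L.flipAt_lt_m, L.flipAt_lt_m]
    exact h q hq p hp i
  · rw [L.flipAt_lt_ne m hi, L.flipAt_lt_ne m hi]
    exact h p hp q hq i

/-- The master placement lemma: extend a finite partial isomorphism by a new pair
`(a, b)` where `b` is prescribed (fresh for the range) and `a` is found, realizing
the pulled-back cut, above all of `LO` and below all of `HI` in order `m`. -/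
lemma placeDom (hL : IsUniversalNLinear n M L) (m : Fin n)
    (F : List (M × M)) (hF : IsoList L F) (b : M)
    (hb : ∀ p ∈ F, b ≠ p.2)
    (LO HI AV : List M)
    (hLOHI : ∀ lo ∈ LO, ∀ hi ∈ HI, L.lt m lo hi)
    (hLO : ∀ lo ∈ LO, ∀ p ∈ F, L.lt m b p.2 → L.lt m lo p.1)
    (hHI : ∀ hi ∈ HI, ∀ p ∈ F, L.lt m p.2 b → L.lt m p.1 hi) :
    ∃ a, a ∉ AV ∧ a ≠ b ∧ (∀ p ∈ F, a ≠ p.1) ∧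
      (∀ lo ∈ LO, L.lt m lo a) ∧ (∀ hi ∈ HI, L.lt m a hi) ∧
      IsoList L ((a, b) :: F) := by
  classical
  set Abase : List M := F.map Prod.fst ++ LO ++ HI ++ AV ++ [b] with hAbase
  set A : Finset M := Abase.toFinset with hA
  have hmemA : ∀ y, y ∈ A ↔ y ∈ Abase := fun y => List.mem_toFinset
  have hfstAb : ∀ p ∈ F, p.1 ∈ Abase := by
    intro p hp
    refine List.mem_append.mpr (Or.inl ?_)
    refine List.mem_append.mpr (Or.inl ?_)
    refine List.mem_append.mpr (Or.inl ?_)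
    refine List.mem_append.mpr (Or.inl ?_)
    exact List.mem_map.mpr ⟨p, hp, rfl⟩
  have hLOAb : ∀ lo ∈ LO, lo ∈ Abase := by
    intro lo hlo
    refine List.mem_append.mpr (Or.inl ?_)
    refine List.mem_append.mpr (Or.inl ?_)
    refine List.mem_append.mpr (Or.inl ?_)
    exact List.mem_append.mpr (Or.inr hlo)
  have hHIAb : ∀ hi ∈ HI, hi ∈ Abase := by
    intro hi hhi
    refine List.mem_append.mpr (Or.inl ?_)
    refine List.mem_append.mpr (Or.inl ?_)
    exact List.mem_append.mpr (Or.inr hhi)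
  have hAVAb : ∀ v ∈ AV, v ∈ Abase := by
    intro v hv
    refine List.mem_append.mpr (Or.inl ?_)
    exact List.mem_append.mpr (Or.inr hv)
  have hbAb : b ∈ Abase := List.mem_append.mpr (Or.inr (List.mem_singleton.mpr rfl))
  set D : Fin n → Set M := fun i =>
    {y | y ∈ A ∧ ((∃ p ∈ F, L.lt i p.2 b ∧ (y = p.1 ∨ L.lt i y p.1)) ∨
      (i = m ∧ ∃ lo ∈ LO, (y = lo ∨ L.lt m y lo)))} with hD
  have hsub : ∀ i, D i ⊆ ↑A := fun i y hy => hy.1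
  have hdc : ∀ i, ∀ a ∈ A, ∀ c ∈ A, L.lt i a c → c ∈ D i → a ∈ D i := by
    intro i a ha c hc hac hcD
    refine ⟨ha, ?_⟩
    rcases hcD.2 with ⟨p, hp, hpb, hcp⟩ | ⟨him, lo, hlo, hclo⟩
    · left
      refine ⟨p, hp, hpb, Or.inr ?_⟩
      rcases hcp with rfl | hcp
      · exact hac
      · exact L.trans i a c p.1 hac hcp
    · right
      subst him
      refine ⟨rfl, lo, hlo, Or.inr ?_⟩
      rcases hclo with rfl | hclo
      · exact hac
      · exact L.trans i a c lo hac hclo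
  obtain ⟨x, hx, hxp⟩ := hL.extension A D hsub hdc
  have hxA : ∀ y ∈ Abase, x ≠ y := by
    intro y hy hxy
    exact hx (hxy ▸ (hmemA y).mpr hy)
  -- key: for p ∈ F, p.1 ∈ D i ↔ L.lt i p.2 b
  have hkey : ∀ i, ∀ p ∈ F, (p.1 ∈ D i ↔ L.lt i p.2 b) := by
    intro i p hp
    constructor
    · rintro ⟨-, ⟨q, hq, hqb, hpq⟩ | ⟨him, lo, hlo, hplo⟩⟩
      · rcases hpq with h1 | h1
        · have : p.2 = q.2 := IsoList.snd_eq m hF hp hq h1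
          exact this ▸ hqb
        · have h2 : L.lt i p.2 q.2 := (hF p hp q hq i).mp h1
          exact L.trans i p.2 q.2 b h2 hqb
      · subst him
        by_contra hcon
        have hne : b ≠ p.2 := hb p hp
        have hbp : L.lt i b p.2 := L.lt_of_ne_of_not_lt (Ne.symm hne) hcon
        have h2 := hLO lo hlo p hp hbp
        rcases hplo with h1 | h1
        · exact L.irrefl i lo (h1 ▸ h2)
        · exact L.asymm h1 h2
    · intro hpb
      exact ⟨(hmemA _).mpr (hfstAb p hp), Or.inl ⟨p, hp, hpb, Or.inl rfl⟩⟩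
  refine ⟨x, ?_, ?_, ?_, ?_, ?_, ?_⟩
  · exact fun hxAV => hxA x (hAVAb x hxAV) rfl
  · exact hxA b hbAb
  · exact fun p hp => hxA p.1 (hfstAb p hp)
  · intro lo hlo
    have : lo ∈ D m := ⟨(hmemA _).mpr (hLOAb lo hlo), Or.inr ⟨rfl, lo, hlo, Or.inl rfl⟩⟩
    exact (hxp m lo ((hmemA _).mpr (hLOAb lo hlo))).mpr this
  · intro hi hhi
    have hnotD : hi ∉ D m := by
      rintro ⟨-, ⟨q, hq, hqb, hhq⟩ | ⟨-, lo, hlo, hhlo⟩⟩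
      · have h2 := hHI hi hhi q hq hqb
        rcases hhq with h1 | h1
        · exact L.irrefl m q.1 (h1 ▸ h2)
        · exact L.asymm h1 h2
      · have h2 := hLOHI lo hlo hi hhi
        rcases hhlo with h1 | h1
        · exact L.irrefl m lo (h1 ▸ h2)
        · exact L.asymm h1 h2
    have hnot : ¬ L.lt m hi x := fun h => hnotD ((hxp m hi ((hmemA _).mpr (hHIAb hi hhi))).mp h)
    exact L.lt_of_ne_of_not_lt (fun h => hxA hi (hHIAb hi hhi) h.symm) hnot
  · -- IsoList ((x, b) :: F)
    intro p hp q hq i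
    rcases List.mem_cons.mp hp with rfl | hp
    · rcases List.mem_cons.mp hq with hq' | hq
      · rw [hq']
        exact iff_of_false (L.irrefl i x) (L.irrefl i b)
      · show L.lt i x q.1 ↔ L.lt i b q.2
        have h1 : L.lt i q.1 x ↔ L.lt i q.2 b :=
          (hxp i q.1 ((hmemA _).mpr (hfstAb q hq))).trans (hkey i q hq)
        have hne1 : x ≠ q.1 := hxA q.1 (hfstAb q hq)
        have hne2 : b ≠ q.2 := hb q hq
        constructor
        · intro h
          by_contra hcon
          have h2 : L.lt i q.2 b := L.lt_of_ne_of_not_lt hne2 hcon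
          exact L.asymm h (h1.mpr h2)
        · intro h
          by_contra hcon
          have h2 : L.lt i q.1 x := L.lt_of_ne_of_not_lt hne1 hcon
          exact L.asymm h (h1.mp h2)
    · rcases List.mem_cons.mp hq with hq' | hq
      · rw [hq']
        show L.lt i p.1 x ↔ L.lt i p.2 b
        exact (hxp i p.1 ((hmemA _).mpr (hfstAb p hp))).trans (hkey i p hp)
      · exact hF p hp q hq i

end Place
section Place2

variable {n : ℕ} {M : Type*} {L : NLinear n M}

lemma IsoList.swap {F : List (M × M)} (h : IsoList L F) :
    IsoList L (F.map Prod.swap) := by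
  intro p hp q hq i
  obtain ⟨p', hp', rfl⟩ := List.mem_map.mp hp
  obtain ⟨q', hq', rfl⟩ := List.mem_map.mp hq
  exact (h p' hp' q' hq' i).symm

/-- Image-side placement: given a fresh source `a`, find an image `b`. -/
lemma placeImg (hL : IsUniversalNLinear n M L) (m : Fin n)
    (F : List (M × M)) (hF : IsoList L F) (a : M)
    (ha : ∀ p ∈ F, a ≠ p.1)
    (LO HI AV : List M)
    (hLOHI : ∀ lo ∈ LO, ∀ hi ∈ HI, L.lt m lo hi)
    (hLO : ∀ lo ∈ LO, ∀ p ∈ F, L.lt m a p.1 → L.lt m lo p.2)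
    (hHI : ∀ hi ∈ HI, ∀ p ∈ F, L.lt m p.1 a → L.lt m p.2 hi) :
    ∃ b, b ∉ AV ∧ b ≠ a ∧ (∀ p ∈ F, b ≠ p.2) ∧
      (∀ lo ∈ LO, L.lt m lo b) ∧ (∀ hi ∈ HI, L.lt m b hi) ∧
      IsoList L ((a, b) :: F) := by
  have hFs : IsoList L (F.map Prod.swap) := hF.swap
  have ha' : ∀ p ∈ F.map Prod.swap, a ≠ p.2 := by
    intro p hp
    obtain ⟨p', hp', rfl⟩ := List.mem_map.mp hp
    exact ha p' hp'
  have hLO' : ∀ lo ∈ LO, ∀ p ∈ F.map Prod.swap, L.lt m a p.2 → L.lt m lo p.1 := by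
    intro lo hlo p hp
    obtain ⟨p', hp', rfl⟩ := List.mem_map.mp hp
    exact hLO lo hlo p' hp'
  have hHI' : ∀ hi ∈ HI, ∀ p ∈ F.map Prod.swap, L.lt m p.2 a → L.lt m p.1 hi := by
    intro hi hhi p hp
    obtain ⟨p', hp', rfl⟩ := List.mem_map.mp hp
    exact hHI hi hhi p' hp'
  obtain ⟨b, h1, h2, h3, h4, h5, h6⟩ :=
    placeDom hL m (F.map Prod.swap) hFs a ha' LO HI AV hLOHI hLO' hHI'
  refine ⟨b, h1, h2, ?_, h4, h5, ?_⟩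
  · intro p hp
    exact h3 (Prod.swap p) (List.mem_map.mpr ⟨p, hp, rfl⟩)
  · have := h6.swap
    have heq : ((b, a) :: F.map Prod.swap).map Prod.swap = (a, b) :: F := by
      simp [List.map_map, Prod.swap_swap_eq]
    rwa [heq] at this

end Place2
section UpSource

variable {n : ℕ} {M : Type*} {L : NLinear n M}

variable (L) in
/-- Points strictly moved up (in order `m`) by `h` are cofinal in order `m`. -/
def UpSource (m : Fin n) (h : Equiv.Perm M) : Prop :=
  ∀ S : List M, ∃ w, (∀ s ∈ S, L.lt m s w) ∧ L.lt m w (h w)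

lemma exists_moved {h : Equiv.Perm M} (hne : h ≠ 1) : ∃ a, h a ≠ a := by
  by_contra hcon
  push_neg at hcon
  exact hne (Equiv.ext hcon)

/-- Moved points are cofinal in order `m` (this is where `n ≥ 2` is used). -/
lemma movedCofinal (hL : IsUniversalNLinear n M L) (m j : Fin n) (hj : j ≠ m)
    {h : Equiv.Perm M} (hha : h ∈ L.aut) (hne : h ≠ 1) :
    ∀ S : List M, ∃ x, (∀ s ∈ S, L.lt m s x) ∧ h x ≠ x := by
  classical
  obtain ⟨a, ha⟩ := exists_moved hne
  intro S
  -- orient the pair (a, h a) in order j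
  obtain ⟨lo, hi, hlohi, hkey⟩ :
      ∃ lo hi : M, L.lt j lo hi ∧ ∀ x, L.lt j lo x → L.lt j x hi → h x ≠ x := by
    rcases L.total j a (h a) with h1 | h1 | h1
    · refine ⟨a, h a, h1, ?_⟩
      intro x hx1 hx2 hfix
      have : L.lt j (h a) (h x) := (hha j a x).mp hx1
      rw [hfix] at this
      exact L.asymm this hx2
    · exact absurd h1.symm ha
    · refine ⟨h a, a, h1, ?_⟩
      intro x hx1 hx2 hfix
      have : L.lt j (h x) (h a) := (hha j x a).mp hx2
      rw [hfix] at this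
      exact L.asymm this hx1
  -- now realize a point in the `j`-interval `(lo, hi)` which is `m`-above `S`
  set Abase : List M := lo :: hi :: S with hAbase
  set A : Finset M := Abase.toFinset with hA
  have hmem : ∀ y, y ∈ A ↔ y ∈ Abase := fun y => List.mem_toFinset
  set D : Fin n → Set M := fun i =>
    if i = j then {y | y ∈ A ∧ (y = lo ∨ L.lt j y lo)}
    else if i = m then ↑A else ∅ with hD
  have hsub : ∀ i, D i ⊆ ↑A := by
    intro i y hy
    simp only [D] at hy
    split_ifs at hy with h1 h2
    · exact hy.1
    · exact hy
    · exact absurd hy (Set.notMem_empty y)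
  have hdc : ∀ i, ∀ a' ∈ A, ∀ b' ∈ A, L.lt i a' b' → b' ∈ D i → a' ∈ D i := by
    intro i a' ha' b' hb' hab hbD
    simp only [D] at hbD ⊢
    split_ifs at hbD ⊢ with h1 h2
    · subst h1
      refine ⟨ha', Or.inr ?_⟩
      rcases hbD.2 with rfl | hlt
      · exact hab
      · exact L.trans i a' b' lo hab hlt
    · exact ha'
    · exact hbD
  obtain ⟨x, hx, hxp⟩ := hL.extension A D hsub hdc
  have hloA : lo ∈ A := (hmem lo).mpr (by simp [Abase])
  have hhiA : hi ∈ A := (hmem hi).mpr (by simp [Abase])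
  have hlox : L.lt j lo x := by
    have : lo ∈ D j := by simp only [D, if_pos rfl]; exact ⟨hloA, Or.inl rfl⟩
    exact (hxp j lo hloA).mpr this
  have hxhi : L.lt j x hi := by
    have hnotD : hi ∉ D j := by
      simp only [D, if_pos rfl]
      rintro ⟨-, h1 | hlt⟩
      · rw [h1] at hlohi
        exact L.irrefl j lo hlohi
      · exact L.asymm hlt hlohi
    have hnot : ¬ L.lt j hi x := fun hl => hnotD ((hxp j hi hhiA).mp hl)
    refine L.lt_of_ne_of_not_lt (fun he => hx (he ▸ hhiA)) hnot
  refine ⟨x, ?_, hkey x hlox hxhi⟩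
  intro s hs
  have hsA : s ∈ A := (hmem s).mpr (by simp [Abase, hs])
  have : s ∈ D m := by
    simp only [D, if_neg (Ne.symm hj), if_pos rfl]
    exact hsA
  exact (hxp m s hsA).mpr this

/-- The sign dichotomy: either `h` or `h⁻¹` has strictly-up-moved points cofinally. -/
lemma upSource_or (hL : IsUniversalNLinear n M L) (m j : Fin n) (hj : j ≠ m)
    {h : Equiv.Perm M} (hha : h ∈ L.aut) (hne : h ≠ 1) :
    UpSource L m h ∨ UpSource L m h⁻¹ := by
  by_cases hcase : UpSource L m h
  · exact Or.inl hcase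
  · right
    rw [UpSource] at hcase
    push_neg at hcase
    obtain ⟨S₀, hS₀⟩ := hcase
    intro S
    obtain ⟨x, hx1, hx2⟩ := movedCofinal hL m j hj hha hne (S₀ ++ S)
    have hS₀x : ∀ s ∈ S₀, L.lt m s x := fun s hs => hx1 s (List.mem_append.mpr (Or.inl hs))
    have hnot : ¬ L.lt m x (h x) := hS₀ x hS₀x
    have hdown : L.lt m (h x) x := L.lt_of_ne_of_not_lt (Ne.symm hx2) hnot
    refine ⟨x, fun s hs => hx1 s (List.mem_append.mpr (Or.inr hs)), ?_⟩
    have hinv := L.aut_inv_mem hha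
    have := (hinv m (h x) x).mp hdown
    simpa using this
end UpSource

section Strict

variable {n : ℕ} {M : Type*} {L : NLinear n M}

/-- Placement of a strictly-up-moved realizer of a top-box pullback. -/
lemma placeDomStrict (hL : IsUniversalNLinear n M L) (m : Fin n)
    {hB : Equiv.Perm M} (hBa : hB ∈ L.aut) (hBup : UpSource L m hB)
    (B : List (M × M)) (hBi : IsoList L B) (b : M)
    (hbfresh : ∀ p ∈ B, b ≠ p.2)
    (hTop : ∀ p ∈ B, L.lt m p.2 b) (SS AV : List M) :
    ∃ p', p' ∉ AV ∧ p' ≠ b ∧ (∀ q ∈ B, p' ≠ q.1) ∧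
      (∀ s ∈ SS, L.lt m s p') ∧ L.lt m p' (hB p') ∧
      (∀ s ∈ SS, L.lt m s (hB p')) ∧ (∀ q ∈ B, L.lt m q.1 (hB p')) ∧
      IsoList L ((p', b) :: B) := by
  obtain ⟨w₀, hw₀, hw₀up⟩ := hBup (SS ++ B.map Prod.fst ++
    (B.map Prod.fst).map (fun y => hB⁻¹ y) ++ SS.map (fun y => hB⁻¹ y))
  have hw₀S : ∀ s ∈ SS, L.lt m s w₀ := fun s hs => hw₀ s (by simp [hs])
  have hw₀B : ∀ q ∈ B, L.lt m q.1 w₀ := fun q hq => hw₀ q.1 (by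
    simp only [List.mem_append]
    exact Or.inl (Or.inl (Or.inr (List.mem_map.mpr ⟨q, hq, rfl⟩))))
  have hw₀B' : ∀ q ∈ B, L.lt m (hB⁻¹ q.1) w₀ := fun q hq => hw₀ (hB⁻¹ q.1) (by
    simp only [List.mem_append]
    exact Or.inl (Or.inr (by
      refine List.mem_map.mpr ⟨q.1, ?_, rfl⟩
      exact List.mem_map.mpr ⟨q, hq, rfl⟩)))
  have hBinv := L.aut_inv_mem hBa
  have hq1hi : ∀ q ∈ B, L.lt m q.1 (hB w₀) := by
    intro q hq
    have := (hBa m (hB⁻¹ q.1) w₀).mp (hw₀B' q hq)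
    simpa using this
  obtain ⟨p', h1, h2, h3, h4, h5, h6⟩ :=
    placeDom hL m B hBi b hbfresh (SS ++ [w₀]) [hB w₀] AV
      (by
        intro lo hlo hi hhi
        rw [List.mem_singleton] at hhi
        subst hhi
        rcases List.mem_append.mp hlo with hs | hs
        · exact L.trans m lo w₀ (hB w₀) (hw₀S lo hs) hw₀up
        · rw [List.mem_singleton] at hs
          subst hs
          exact hw₀up)
      (by
        intro lo hlo p hp hbp
        exact absurd hbp (L.asymm (hTop p hp)))
      (by
        intro hi hhi p hp hpb
        rw [List.mem_singleton] at hhi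
        subst hhi
        exact hq1hi p hp)
  have hw₀p' : L.lt m w₀ p' := h4 w₀ (by simp)
  have hp'hi : L.lt m p' (hB w₀) := h5 (hB w₀) (by simp)
  have hstrict : L.lt m p' (hB p') := by
    have : L.lt m (hB w₀) (hB p') := (hBa m w₀ p').mp hw₀p'
    exact L.trans m p' (hB w₀) (hB p') hp'hi this
  refine ⟨p', h1, h2, h3, ?_, hstrict, ?_, ?_, h6⟩
  · exact fun s hs => h4 s (List.mem_append.mpr (Or.inl hs))
  · intro s hs
    exact L.trans m s p' (hB p') (h4 s (List.mem_append.mpr (Or.inl hs))) hstrict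
  · intro q hq
    have : L.lt m (hB w₀) (hB p') := (hBa m w₀ p').mp hw₀p'
    exact L.trans m q.1 (hB w₀) (hB p') (hq1hi q hq) this

end Strict
section HalfRung

variable {n : ℕ} {M : Type*} {L : NLinear n M}

/-- One half-rung of the construction: starting from an active point `e` lying
`m`-above the ranges of both partial isomorphisms `A` and `B`, extend `A` and `B` by
pairs tracing `e ↦ v₁ = A(hA(A⁻¹ e)) ↦ e'' = B(hB(B⁻¹ v₁))`, where the new point
`e''` lies strictly `m`-above everything named. -/
lemma halfRung (hL : IsUniversalNLinear n M L) (m : Fin n)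
    {hA hB : Equiv.Perm M} (hAa : hA ∈ L.aut) (hBa : hB ∈ L.aut)
    (hBup : UpSource L m hB)
    (A B : List (M × M)) (hAi : IsoList L A) (hBi : IsoList L B)
    (Nm : List M) (e fl : M)
    (hsubA : ∀ p ∈ A, p.1 ∈ Nm ∧ p.2 ∈ Nm) (hsubB : ∀ p ∈ B, p.1 ∈ Nm ∧ p.2 ∈ Nm)
    (he : e ∈ Nm) (hfl' : L.lt m fl e ∨ fl = e)
    (hTA : ∀ p ∈ A, L.lt m p.2 e) (hTB : ∀ p ∈ B, L.lt m p.2 e) :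
    ∃ (A' B' : List (M × M)) (Nm' : List M) (w v₁ p' e'' : M),
      A ⊆ A' ∧ B ⊆ B' ∧ Nm ⊆ Nm' ∧ IsoList L A' ∧ IsoList L B' ∧
      (∀ p ∈ A', p.1 ∈ Nm' ++ [e''] ∧ p.2 ∈ Nm' ++ [e'']) ∧
      (∀ p ∈ B', p.1 ∈ Nm' ++ [e''] ∧ p.2 ∈ Nm' ++ [e'']) ∧
      (w, e) ∈ A' ∧ (hA w, v₁) ∈ A' ∧ (p', v₁) ∈ B' ∧ (hB p', e'') ∈ B' ∧
      (∀ q ∈ A', q ∈ A ∨ q = (w, e) ∨ q = (hA w, v₁)) ∧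
      (∀ q ∈ B', q ∈ B ∨ q = (p', v₁) ∨ q = (hB p', e'')) ∧
      (∀ y ∈ Nm', L.lt m y e'') ∧
      (L.lt m fl v₁ ∨ fl = e) := by
  classical
  -- Step 1: pull back `e` along `A`.
  obtain ⟨w, hw1, hw2, hw3, hw4, -, hwiso⟩ :=
    placeDom hL m A hAi e
      (fun p hp => Ne.symm (L.ne_of_lt (hTA p hp)))
      (Nm.map (fun y => hA⁻¹ y)) [] Nm
      (by intro lo hlo hi hhi; simp at hhi)
      (by intro lo hlo p hp hep; exact absurd hep (L.asymm (hTA p hp)))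
      (by intro hi hhi; simp at hhi)
  have hAwhi : ∀ y ∈ Nm, L.lt m y (hA w) := by
    intro y hy
    have h1 : L.lt m (hA⁻¹ y) w := hw4 _ (List.mem_map.mpr ⟨y, hy, rfl⟩)
    have := (hAa m (hA⁻¹ y) w).mp h1
    simpa using this
  have hAwA : ∀ p ∈ A, hA w ≠ p.1 :=
    fun p hp => Ne.symm (L.ne_of_lt (hAwhi p.1 (hsubA p hp).1))
  set A₁ : List (M × M) := (w, e) :: A with hA₁
  -- Step 2: place `v₁ := A (hA w)`, with case distinction on the sign of `w ↦ hA w`.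
  obtain ⟨A', v₁, hsubA', hA'iso, hmem1, hmem2, hchar, hflv, hv1top, hv1fresh⟩ :
      ∃ (A' : List (M × M)) (v₁ : M),
        A ⊆ A' ∧ IsoList L A' ∧ (w, e) ∈ A' ∧ (hA w, v₁) ∈ A' ∧
        (∀ q ∈ A', q ∈ A ∨ q = (w, e) ∨ q = (hA w, v₁)) ∧
        (L.lt m fl v₁ ∨ fl = e) ∧ (∀ p ∈ B, L.lt m p.2 v₁) ∧ (∀ p ∈ B, v₁ ≠ p.2) := by
    rcases L.total m w (hA w) with hup | heq | hdn
    · -- up: place `v₁` above everything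
      obtain ⟨v₁, hv1, hv2, hv3, hv4, -, hviso⟩ :=
        placeImg hL m A₁ hwiso (hA w)
          (by
            intro p hp
            rcases List.mem_cons.mp hp with rfl | hp
            · exact Ne.symm (L.ne_of_lt hup)
            · exact hAwA p hp)
          (fl :: Nm) [] Nm
          (by intro lo hlo hi hhi; simp at hhi)
          (by
            intro lo hlo p hp hlt
            exfalso
            rcases List.mem_cons.mp hp with rfl | hp
            · exact L.asymm hlt hup
            · exact L.asymm hlt (hAwhi p.1 (hsubA p hp).1))
          (by intro hi hhi; simp at hhi)
      refine ⟨(hA w, v₁) :: A₁, v₁, ?_, hviso, ?_, ?_, ?_, ?_, ?_, ?_⟩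
      · intro q hq; exact List.mem_cons.mpr (Or.inr (List.mem_cons.mpr (Or.inr hq)))
      · exact List.mem_cons.mpr (Or.inr (List.mem_cons.mpr (Or.inl rfl)))
      · exact List.mem_cons.mpr (Or.inl rfl)
      · intro q hq
        rcases List.mem_cons.mp hq with rfl | hq
        · right; right; rfl
        · rcases List.mem_cons.mp hq with rfl | hq
          · right; left; rfl
          · left; exact hq
      · exact Or.inl (hv4 fl (List.mem_cons.mpr (Or.inl rfl)))
      · intro p hp
        exact hv4 p.2 (List.mem_cons.mpr (Or.inr (hsubB p hp).2))
      · intro p hp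
        exact Ne.symm (L.ne_of_lt (hv4 p.2 (List.mem_cons.mpr (Or.inr (hsubB p hp).2))))
    · -- fixed: reuse the pair `(w, e)`
      refine ⟨A₁, e, ?_, hwiso, List.mem_cons.mpr (Or.inl rfl), ?_, ?_, hfl', hTB, ?_⟩
      · intro q hq; exact List.mem_cons.mpr (Or.inr hq)
      · rw [← heq]; exact List.mem_cons.mpr (Or.inl rfl)
      · intro q hq
        rcases List.mem_cons.mp hq with rfl | hq
        · right; left; rfl
        · left; exact hq
      · exact fun p hp => Ne.symm (L.ne_of_lt (hTB p hp))
    · -- down: place `v₁` between the floor material and `e`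
      rcases hfl' with hfl | hfleq
      · obtain ⟨v₁, hv1, hv2, hv3, hv4, -, hviso⟩ :=
          placeImg hL m A₁ hwiso (hA w)
            (by
              intro p hp
              rcases List.mem_cons.mp hp with rfl | hp
              · exact L.ne_of_lt hdn
              · exact hAwA p hp)
            (fl :: B.map Prod.snd) [] Nm
            (by intro lo hlo hi hhi; simp at hhi)
            (by
              intro lo hlo p hp hlt
              rcases List.mem_cons.mp hp with rfl | hp
              · rcases List.mem_cons.mp hlo with rfl | hlo
                · exact hfl
                · obtain ⟨q, hq, rfl⟩ := List.mem_map.mp hlo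
                  exact hTB q hq
              · exact absurd hlt (L.asymm (hAwhi p.1 (hsubA p hp).1)))
            (by intro hi hhi; simp at hhi)
        refine ⟨(hA w, v₁) :: A₁, v₁, ?_, hviso, ?_, ?_, ?_, ?_, ?_, ?_⟩
        · intro q hq; exact List.mem_cons.mpr (Or.inr (List.mem_cons.mpr (Or.inr hq)))
        · exact List.mem_cons.mpr (Or.inr (List.mem_cons.mpr (Or.inl rfl)))
        · exact List.mem_cons.mpr (Or.inl rfl)
        · intro q hq
          rcases List.mem_cons.mp hq with rfl | hq
          · right; right; rfl
          · rcases List.mem_cons.mp hq with rfl | hq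
            · right; left; rfl
            · left; exact hq
        · exact Or.inl (hv4 fl (List.mem_cons.mpr (Or.inl rfl)))
        · intro p hp
          exact hv4 p.2 (List.mem_cons.mpr (Or.inr (List.mem_map.mpr ⟨p, hp, rfl⟩)))
        · intro p hp
          exact Ne.symm (L.ne_of_lt (hv4 p.2 (List.mem_cons.mpr (Or.inr (List.mem_map.mpr ⟨p, hp, rfl⟩)))))
      · obtain ⟨v₁, hv1, hv2, hv3, hv4, -, hviso⟩ :=
          placeImg hL m A₁ hwiso (hA w)
            (by
              intro p hp
              rcases List.mem_cons.mp hp with rfl | hp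
              · exact L.ne_of_lt hdn
              · exact hAwA p hp)
            (B.map Prod.snd) [] Nm
            (by intro lo hlo hi hhi; simp at hhi)
            (by
              intro lo hlo p hp hlt
              rcases List.mem_cons.mp hp with rfl | hp
              · obtain ⟨q, hq, rfl⟩ := List.mem_map.mp hlo
                exact hTB q hq
              · exact absurd hlt (L.asymm (hAwhi p.1 (hsubA p hp).1)))
            (by intro hi hhi; simp at hhi)
        refine ⟨(hA w, v₁) :: A₁, v₁, ?_, hviso, ?_, ?_, ?_, Or.inr hfleq, ?_, ?_⟩
        · intro q hq; exact List.mem_cons.mpr (Or.inr (List.mem_cons.mpr (Or.inr hq)))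
        · exact List.mem_cons.mpr (Or.inr (List.mem_cons.mpr (Or.inl rfl)))
        · exact List.mem_cons.mpr (Or.inl rfl)
        · intro q hq
          rcases List.mem_cons.mp hq with rfl | hq
          · right; right; rfl
          · rcases List.mem_cons.mp hq with rfl | hq
            · right; left; rfl
            · left; exact hq
        · intro p hp
          exact hv4 p.2 (List.mem_map.mpr ⟨p, hp, rfl⟩)
        · intro p hp
          exact Ne.symm (L.ne_of_lt (hv4 p.2 (List.mem_map.mpr ⟨p, hp, rfl⟩)))
  -- Step 3: pull back `v₁` along `B` with a strictly-up-moved realizer.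
  obtain ⟨p', hp1, hp2, hp3, -, hpstrict, -, hphi, hpiso⟩ :=
    placeDomStrict hL m hBa hBup B hBi v₁ hv1fresh hv1top [] (Nm ++ [w, hA w, v₁])
  set B₁ : List (M × M) := (p', v₁) :: B with hB₁
  -- Step 4: place `e'' := B (hB p')` above everything.
  set NmBig : List M := Nm ++ [w, hA w, v₁, p', hB p'] with hNmBig
  obtain ⟨e'', he1, he2, he3, he4, -, heiso⟩ :=
    placeImg hL m B₁ hpiso (hB p')
      (by
        intro q hq
        rcases List.mem_cons.mp hq with rfl | hq
        · exact Ne.symm (L.ne_of_lt hpstrict)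
        · exact Ne.symm (L.ne_of_lt (hphi q hq)))
      NmBig [] NmBig
      (by intro lo hlo hi hhi; simp at hhi)
      (by
        intro lo hlo q hq hlt
        exfalso
        rcases List.mem_cons.mp hq with rfl | hq
        · exact L.asymm hlt hpstrict
        · exact L.asymm hlt (hphi q hq))
      (by intro hi hhi; simp at hhi)
  have hNmBigMem : ∀ y ∈ Nm, y ∈ NmBig := fun y hy => List.mem_append.mpr (Or.inl hy)
  have hmemBig : ∀ y ∈ ([w, hA w, v₁, p', hB p'] : List M), y ∈ NmBig :=
    fun y hy => List.mem_append.mpr (Or.inr hy)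
  refine ⟨A', (hB p', e'') :: B₁, NmBig, w, v₁, p', e'', hsubA', ?_, hNmBigMem, hA'iso, heiso,
    ?_, ?_, hmem1, hmem2, ?_, ?_, hchar, ?_, he4, hflv⟩
  · intro q hq
    exact List.mem_cons.mpr (Or.inr (List.mem_cons.mpr (Or.inr hq)))
  · -- A'-closure
    intro q hq
    rcases hchar q hq with hq' | hq' | hq'
    · exact ⟨List.mem_append.mpr (Or.inl (hNmBigMem _ (hsubA q hq').1)),
        List.mem_append.mpr (Or.inl (hNmBigMem _ (hsubA q hq').2))⟩
    · rw [hq']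
      exact ⟨List.mem_append.mpr (Or.inl (hmemBig w (by simp))),
        List.mem_append.mpr (Or.inl (hNmBigMem e he))⟩
    · rw [hq']
      exact ⟨List.mem_append.mpr (Or.inl (hmemBig (hA w) (by simp))),
        List.mem_append.mpr (Or.inl (hmemBig v₁ (by simp)))⟩
  · -- B'-closure
    intro q hq
    rcases List.mem_cons.mp hq with rfl | hq
    · exact ⟨List.mem_append.mpr (Or.inl (hmemBig (hB p') (by simp))),
        List.mem_append.mpr (Or.inr (by simp))⟩
    · rcases List.mem_cons.mp hq with rfl | hq
      · exact ⟨List.mem_append.mpr (Or.inl (hmemBig p' (by simp))),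
          List.mem_append.mpr (Or.inl (hmemBig v₁ (by simp)))⟩
      · exact ⟨List.mem_append.mpr (Or.inl (hNmBigMem _ (hsubB q hq).1)),
          List.mem_append.mpr (Or.inl (hNmBigMem _ (hsubB q hq).2))⟩
  · exact List.mem_cons.mpr (Or.inr (List.mem_cons.mpr (Or.inl rfl)))
  · exact List.mem_cons.mpr (Or.inl rfl)
  · intro q hq
    rcases List.mem_cons.mp hq with rfl | hq
    · right; right; rfl
    · rcases List.mem_cons.mp hq with rfl | hq
      · right; left; rfl
      · left; exact hq

end HalfRung
section Fillers

variable {n : ℕ} {M : Type*} {L : NLinear n M}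

lemma insertDom (hL : IsUniversalNLinear n M L) (m : Fin n)
    (F : List (M × M)) (hF : IsoList L F) (x : M) (LO HI : List M)
    (hLOHI : ∀ lo ∈ LO, ∀ hi ∈ HI, L.lt m lo hi)
    (hLO : ∀ lo ∈ LO, ∀ p ∈ F, L.lt m x p.1 → L.lt m lo p.2)
    (hHI : ∀ hi ∈ HI, ∀ p ∈ F, L.lt m p.1 x → L.lt m p.2 hi) :
    ∃ F', F ⊆ F' ∧ IsoList L F' ∧ (∃ y, (x, y) ∈ F') ∧
      (∀ q ∈ F', q ∈ F ∨ ((∀ lo ∈ LO, L.lt m lo q.2) ∧ (∀ hi ∈ HI, L.lt m q.2 hi))) := by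
  classical
  by_cases hx : ∃ y, (x, y) ∈ F
  · exact ⟨F, List.Subset.refl F, hF, hx, fun q hq => Or.inl hq⟩
  · have ha : ∀ p ∈ F, x ≠ p.1 := by
      intro p hp hxp
      exact hx ⟨p.2, by rw [hxp]; exact hp⟩
    obtain ⟨b, -, -, -, h4, h5, h6⟩ := placeImg hL m F hF x ha LO HI [] hLOHI hLO hHI
    refine ⟨(x, b) :: F, List.subset_cons_self _ _, h6, ⟨b, List.mem_cons.mpr (Or.inl rfl)⟩, ?_⟩
    intro q hq
    rcases List.mem_cons.mp hq with rfl | hq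
    · exact Or.inr ⟨h4, h5⟩
    · exact Or.inl hq

lemma insertRan (hL : IsUniversalNLinear n M L) (m : Fin n)
    (F : List (M × M)) (hF : IsoList L F) (x : M) :
    ∃ F', F ⊆ F' ∧ IsoList L F' ∧ (∃ y, (y, x) ∈ F') ∧
      (∀ q ∈ F', q ∈ F ∨ q.2 = x) := by
  classical
  by_cases hx : ∃ y, (y, x) ∈ F
  · exact ⟨F, List.Subset.refl F, hF, hx, fun q hq => Or.inl hq⟩
  · have hb : ∀ p ∈ F, x ≠ p.2 := by
      intro p hp hxp
      exact hx ⟨p.1, by rw [hxp]; exact hp⟩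
    obtain ⟨a, -, -, -, -, -, h6⟩ := placeDom hL m F hF x hb [] [] []
      (by intro lo hlo; simp at hlo) (by intro lo hlo; simp at hlo)
      (by intro hi hhi; simp at hhi)
    refine ⟨(a, x) :: F, List.subset_cons_self _ _, h6, ⟨a, List.mem_cons.mpr (Or.inl rfl)⟩, ?_⟩
    intro q hq
    rcases List.mem_cons.mp hq with rfl | hq
    · exact Or.inr rfl
    · exact Or.inl hq

lemma isoList_of_flip {m : Fin n} {F : List (M × M)}
    (h : IsoList (L.flipAt m) F) : IsoList L F := by
  intro p hp q hq i
  by_cases hi : i = m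
  · subst hi
    have h1 := h q hq p hp i
    rw [L.flipAt_lt_m, L.flipAt_lt_m] at h1
    exact h1
  · have h1 := h p hp q hq i
    rw [L.flipAt_lt_ne m hi, L.flipAt_lt_ne m hi] at h1
    exact h1

end Fillers
section Stage

variable {n : ℕ} {M : Type*}

/-- The state of the construction after a stage: four finite partial isomorphisms,
the list of named points, and the two active (extreme) orbit points. -/
structure Stg (M : Type*) where
  lm : List (M × M)
  km' : List (M × M)
  lm' : List (M × M)
  km : List (M × M)
  nm : List M
  eP : M
  eM : M

variable {L : NLinear n M}

structure StInv (L : NLinear n M) (m : Fin n) (S : Stg M) : Prop where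
  isoL : IsoList L S.lm
  isoK' : IsoList L S.km'
  isoL' : IsoList L S.lm'
  isoK : IsoList L S.km
  clL : ∀ p ∈ S.lm, p.1 ∈ S.nm ∧ p.2 ∈ S.nm
  clK' : ∀ p ∈ S.km', p.1 ∈ S.nm ∧ p.2 ∈ S.nm
  clL' : ∀ p ∈ S.lm', p.1 ∈ S.nm ∧ p.2 ∈ S.nm
  clK : ∀ p ∈ S.km, p.1 ∈ S.nm ∧ p.2 ∈ S.nm
  ePnm : S.eP ∈ S.nm
  eMnm : S.eM ∈ S.nm
  t1 : ∀ p ∈ S.lm, L.lt m p.2 S.eP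
  t2 : ∀ p ∈ S.km', L.lt m p.2 S.eP
  b1 : ∀ p ∈ S.km, L.lt m S.eM p.2
  b2 : ∀ p ∈ S.lm', L.lt m S.eM p.2
  em_lt : L.lt m S.eM S.eP ∨ S.eM = S.eP


structure StepProp (L : NLinear n M) (m : Fin n) (g₁ g₂ : Equiv.Perm M)
    (S S' : Stg M) (x : M) : Prop where
  subL : S.lm ⊆ S'.lm
  subK' : S.km' ⊆ S'.km'
  subL' : S.lm' ⊆ S'.lm'
  subK : S.km ⊆ S'.km
  subNm : S.nm ⊆ S'.nm
  ftrace : ∃ w v₁ p₁ v₂ w₂ v₃ p₂,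
      (w, S.eP) ∈ S'.lm ∧ (g₂ w, v₁) ∈ S'.lm ∧
      (p₁, v₁) ∈ S'.km' ∧ (g₁ p₁, v₂) ∈ S'.km' ∧
      (w₂, v₂) ∈ S'.lm' ∧ (g₂ w₂, v₃) ∈ S'.lm' ∧
      (p₂, v₃) ∈ S'.km ∧ (g₁ p₂, S'.eP) ∈ S'.km
  btrace : ∃ wb₁ u₁ pb₂ u₂ wb₃ u₃ pb₄,
      (wb₁, S.eM) ∈ S'.km ∧ (g₁⁻¹ wb₁, u₁) ∈ S'.km ∧
      (pb₂, u₁) ∈ S'.lm' ∧ (g₂⁻¹ pb₂, u₂) ∈ S'.lm' ∧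
      (wb₃, u₂) ∈ S'.km' ∧ (g₁⁻¹ wb₃, u₃) ∈ S'.km' ∧
      (pb₄, u₃) ∈ S'.lm ∧ (g₂⁻¹ pb₄, S'.eM) ∈ S'.lm
  xhi : L.lt m x S'.eP
  xlo : L.lt m S'.eM x
  up : L.lt m S.eP S'.eP
  dn : L.lt m S'.eM S.eM
  cLd : ∃ y, (x, y) ∈ S'.lm
  cLr : ∃ y, (y, x) ∈ S'.lm
  cK'd : ∃ y, (x, y) ∈ S'.km'
  cK'r : ∃ y, (y, x) ∈ S'.km'
  cL'd : ∃ y, (x, y) ∈ S'.lm'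
  cL'r : ∃ y, (y, x) ∈ S'.lm'
  cKd : ∃ y, (x, y) ∈ S'.km
  cKr : ∃ y, (y, x) ∈ S'.km

/-- One full stage: a forward rung, a backward rung, and the filler insertions. -/
lemma stageStep (hL : IsUniversalNLinear n M L) (m : Fin n)
    {g₁ g₂ : Equiv.Perm M} (hg₁ : g₁ ∈ L.aut) (hg₂ : g₂ ∈ L.aut)
    (hup₁ : UpSource L m g₁) (hup₂ : UpSource (L.flipAt m) m g₂⁻¹)
    (S : Stg M) (hS : StInv L m S) (x : M) :
    ∃ S' : Stg M, StInv L m S' ∧ StepProp L m g₁ g₂ S S' x := by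
  classical
  have hLf : IsUniversalNLinear n M (L.flipAt m) := hL.flipAt m
  have hg₁f : g₁⁻¹ ∈ (L.flipAt m).aut := by
    rw [L.flipAt_aut]; exact L.aut_inv_mem hg₁
  have hg₂f : g₂⁻¹ ∈ (L.flipAt m).aut := by
    rw [L.flipAt_aut]; exact L.aut_inv_mem hg₂
  set Nm₀ : List M := S.nm ++ [x] with hNm₀
  have hnm₀ : S.nm ⊆ Nm₀ := List.subset_append_left _ _
  have hxNm₀ : x ∈ Nm₀ := List.mem_append.mpr (Or.inr (List.mem_singleton.mpr rfl))
  -- ===== forward half 1 : A = lm (g₂), B = km' (g₁), e = eP, fl = eM =====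
  obtain ⟨L₁, K₁, Nm₁, w, v₁, p₁, v₂, ha1, hb1, hn1, hiso1A, hiso1B, hcl1A, hcl1B,
      hq11, hq12, hq13, hq14, hchar1A, hchar1B, hC41, hflv1⟩ :=
    halfRung hL m hg₂ hg₁ hup₁ S.lm S.km' hS.isoL hS.isoK' Nm₀ S.eP S.eM
      (fun p hp => ⟨hnm₀ (hS.clL p hp).1, hnm₀ (hS.clL p hp).2⟩)
      (fun p hp => ⟨hnm₀ (hS.clK' p hp).1, hnm₀ (hS.clK' p hp).2⟩)
      (hnm₀ hS.ePnm) hS.em_lt hS.t1 hS.t2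
  set Nm₁' : List M := Nm₁ ++ [v₂] with hNm₁'
  have hn1' : Nm₁ ⊆ Nm₁' := List.subset_append_left _ _
  have hv₂Nm : v₂ ∈ Nm₁' := List.mem_append.mpr (Or.inr (List.mem_singleton.mpr rfl))
  have hNm₀₁ : Nm₀ ⊆ Nm₁' := fun y hy => hn1' (hn1 hy)
  -- ===== forward half 2 : A = lm' (g₂), B = km (g₁), e = v₂, fl = eM =====
  obtain ⟨L₂, K₂, Nm₂, w₂, v₃, p₂, eP', ha2, hb2, hn2, hiso2A, hiso2B, hcl2A, hcl2B,
      hq21, hq22, hq23, hq24, hchar2A, hchar2B, hC42, hflv2⟩ :=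
    halfRung hL m hg₂ hg₁ hup₁ S.lm' S.km hS.isoL' hS.isoK Nm₁' v₂ S.eM
      (fun p hp => ⟨hNm₀₁ (hnm₀ (hS.clL' p hp).1), hNm₀₁ (hnm₀ (hS.clL' p hp).2)⟩)
      (fun p hp => ⟨hNm₀₁ (hnm₀ (hS.clK p hp).1), hNm₀₁ (hnm₀ (hS.clK p hp).2)⟩)
      hv₂Nm
      (Or.inl (hC41 S.eM (hn1 (hnm₀ hS.eMnm))))
      (fun p hp => hC41 p.2 (hn1 (hnm₀ (hS.clL' p hp).2)))
      (fun p hp => hC41 p.2 (hn1 (hnm₀ (hS.clK p hp).2)))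
  set Nm₂' : List M := Nm₂ ++ [eP'] with hNm₂'
  have hn2' : Nm₂ ⊆ Nm₂' := List.subset_append_left _ _
  have hePNm : eP' ∈ Nm₂' := List.mem_append.mpr (Or.inr (List.mem_singleton.mpr rfl))
  have hNm₁₂ : Nm₁' ⊆ Nm₂' := fun y hy => hn2' (hn2 hy)
  have hxeP' : L.lt m x eP' := hC42 x (hn2 (hNm₀₁ hxNm₀))
  have hePeP' : L.lt m S.eP eP' := hC42 S.eP (hn2 (hNm₀₁ (hnm₀ hS.ePnm)))
  have heMeP' : L.lt m S.eM eP' := hC42 S.eM (hn2 (hNm₀₁ (hnm₀ hS.eMnm)))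
  have hflv2' : L.lt m S.eM v₃ :=
    hflv2.resolve_right (fun h => L.irrefl m v₂ (h ▸ hC41 S.eM (hn1 (hnm₀ hS.eMnm))))
  -- ===== backward half 1 (flipped) : A = K₂ (g₁⁻¹), B = L₂ (g₂⁻¹), e = eM, fl = eP' =====
  obtain ⟨K₃, L₃, Nm₃, wb₁, u₁, pb₂, u₂, ha3, hb3, hn3, hiso3A, hiso3B, hcl3A, hcl3B,
      hq31, hq32, hq33, hq34, hchar3A, hchar3B, hC43, hflv3⟩ :=
    halfRung hLf m hg₁f hg₂f hup₂ K₂ L₂ (hiso2B.flipAt m) (hiso2A.flipAt m) Nm₂' S.eM eP'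
      hcl2B
      hcl2A
      (hNm₁₂ (hNm₀₁ (hnm₀ hS.eMnm)))
      (Or.inl (by rw [L.flipAt_lt_m]; exact heMeP'))
      (by
        intro p hp
        rw [L.flipAt_lt_m]
        rcases hchar2B p hp with hp' | hp' | hp'
        · exact hS.b1 p hp'
        · rw [hp']; exact hflv2'
        · rw [hp']; exact heMeP')
      (by
        intro p hp
        rw [L.flipAt_lt_m]
        rcases hchar2A p hp with hp' | hp' | hp'
        · exact hS.b2 p hp'
        · rw [hp']; exact hC41 S.eM (hn1 (hnm₀ hS.eMnm))
        · rw [hp']; exact hflv2')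
  set Nm₃' : List M := Nm₃ ++ [u₂] with hNm₃'
  have hn3' : Nm₃ ⊆ Nm₃' := List.subset_append_left _ _
  have hu₂Nm : u₂ ∈ Nm₃' := List.mem_append.mpr (Or.inr (List.mem_singleton.mpr rfl))
  have hNm₂₃ : Nm₂' ⊆ Nm₃' := fun y hy => hn3' (hn3 hy)
  have hu₂lt : ∀ y ∈ Nm₃, L.lt m u₂ y := by
    intro y hy
    have := hC43 y hy
    rwa [L.flipAt_lt_m] at this
  -- ===== backward half 2 (flipped) : A = K₁ (g₁⁻¹), B = L₁ (g₂⁻¹), e = u₂, fl = eP' =====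
  obtain ⟨K₄, L₄, Nm₄, wb₃, u₃, pb₄, eM', ha4, hb4, hn4, hiso4A, hiso4B, hcl4A, hcl4B,
      hq41, hq42, hq43, hq44, hchar4A, hchar4B, hC44, hflv4⟩ :=
    halfRung hLf m hg₁f hg₂f hup₂ K₁ L₁ (hiso1B.flipAt m) (hiso1A.flipAt m) Nm₃' u₂ eP'
      (fun p hp => ⟨hNm₂₃ (hNm₁₂ (hcl1B p hp).1), hNm₂₃ (hNm₁₂ (hcl1B p hp).2)⟩)
      (fun p hp => ⟨hNm₂₃ (hNm₁₂ (hcl1A p hp).1), hNm₂₃ (hNm₁₂ (hcl1A p hp).2)⟩)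
      hu₂Nm
      (Or.inl (hC43 eP' (hn3 hePNm)))
      (fun p hp => hC43 p.2 (hn3 (hNm₁₂ (hcl1B p hp).2)))
      (fun p hp => hC43 p.2 (hn3 (hNm₁₂ (hcl1A p hp).2)))
  have heM'lt : ∀ y ∈ Nm₄, L.lt m eM' y := by
    intro y hy
    have := hC44 y hy
    rwa [L.flipAt_lt_m] at this
  have hu₃eP' : L.lt m u₃ eP' := by
    have h := hflv4.resolve_right (fun h => L.irrefl m eP' (by
      have h2 := hu₂lt eP' (hn3 hePNm)
      rw [← h] at h2
      exact h2))
    rwa [L.flipAt_lt_m] at h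
  have hu₁eP' : L.lt m u₁ eP' := by
    have h := hflv3.resolve_right (fun h => L.irrefl m eP' (h ▸ heMeP'))
    rwa [L.flipAt_lt_m] at h
  have hePNm₄ : eP' ∈ Nm₄ := hn4 (hn3' (hn3 hePNm))
  have heM'eP' : L.lt m eM' eP' := heM'lt eP' hePNm₄
  have hxNm₄ : x ∈ Nm₄ := hn4 (hNm₂₃ (hNm₁₂ (hNm₀₁ hxNm₀)))
  have heM'x : L.lt m eM' x := heM'lt x hxNm₄
  have heM'eM : L.lt m eM' S.eM := heM'lt S.eM (hn4 (hNm₂₃ (hNm₁₂ (hNm₀₁ (hnm₀ hS.eMnm)))))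
  -- isos back in L-orientation
  have hisoL₄ : IsoList L L₄ := isoList_of_flip hiso4B
  have hisoK₄ : IsoList L K₄ := isoList_of_flip hiso4A
  have hisoL₃ : IsoList L L₃ := isoList_of_flip hiso3B
  have hisoK₃ : IsoList L K₃ := isoList_of_flip hiso3A
  -- pre-filler top/bottom facts
  have hNm₁Nm₂ : ∀ y ∈ Nm₁', y ∈ Nm₂ := fun y hy => hn2 hy
  have t1cur : ∀ p ∈ L₄, L.lt m p.2 eP' := by
    intro p hp
    rcases hchar4B p hp with hp' | hp' | hp'
    · exact hC42 p.2 (hNm₁Nm₂ p.2 (hcl1A p hp').2)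
    · rw [hp']; exact hu₃eP'
    · rw [hp']; exact heM'eP'
  have t2cur : ∀ p ∈ K₄, L.lt m p.2 eP' := by
    intro p hp
    rcases hchar4A p hp with hp' | hp' | hp'
    · exact hC42 p.2 (hNm₁Nm₂ p.2 (hcl1B p hp').2)
    · rw [hp']
      exact hu₂lt eP' (hn3 hePNm)
    · rw [hp']; exact hu₃eP'
  have b1cur : ∀ p ∈ K₃, L.lt m eM' p.2 := by
    intro p hp
    exact heM'lt p.2 (hn4 (hcl3A p hp).2)
  have b2cur : ∀ p ∈ L₃, L.lt m eM' p.2 := by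
    intro p hp
    exact heM'lt p.2 (hn4 (hcl3B p hp).2)
  -- ===== fillers =====
  obtain ⟨L₅, hL45, hisoL₅, hLdom, hcharL₅⟩ := insertDom hL m L₄ hisoL₄ x [] [eP']
    (by intro lo hlo; simp at hlo) (by intro lo hlo; simp at hlo)
    (by
      intro hi hhi p hp hlt
      rw [List.mem_singleton] at hhi
      rw [hhi]; exact t1cur p hp)
  obtain ⟨L₆, hL56, hisoL₆, hLran, hcharL₆⟩ := insertRan hL m L₅ hisoL₅ x
  obtain ⟨K₅, hK45, hisoK₅, hKdom, hcharK₅⟩ := insertDom hL m K₄ hisoK₄ x [] [eP']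
    (by intro lo hlo; simp at hlo) (by intro lo hlo; simp at hlo)
    (by
      intro hi hhi p hp hlt
      rw [List.mem_singleton] at hhi
      rw [hhi]; exact t2cur p hp)
  obtain ⟨K₆, hK56, hisoK₆, hKran, hcharK₆⟩ := insertRan hL m K₅ hisoK₅ x
  obtain ⟨L₇, hL37, hisoL₇, hL'dom, hcharL₇⟩ := insertDom hL m L₃ hisoL₃ x [eM'] []
    (by intro lo hlo hi hhi; simp at hhi)
    (by
      intro lo hlo p hp hlt
      rw [List.mem_singleton] at hlo
      rw [hlo]; exact b2cur p hp)
    (by intro hi hhi; simp at hhi)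
  obtain ⟨L₈, hL78, hisoL₈, hL'ran, hcharL₈⟩ := insertRan hL m L₇ hisoL₇ x
  obtain ⟨K₇, hK37, hisoK₇, hK'dom, hcharK₇⟩ := insertDom hL m K₃ hisoK₃ x [eM'] []
    (by intro lo hlo hi hhi; simp at hhi)
    (by
      intro lo hlo p hp hlt
      rw [List.mem_singleton] at hlo
      rw [hlo]; exact b1cur p hp)
    (by intro hi hhi; simp at hhi)
  obtain ⟨K₈, hK78, hisoK₈, hK'ran, hcharK₈⟩ := insertRan hL m K₇ hisoK₇ x
  -- final state
  set comps : List (M × M) → List M := fun F => F.map Prod.fst ++ F.map Prod.snd with hcomps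
  have hcomp_mem : ∀ (F : List (M × M)), ∀ p ∈ F, p.1 ∈ comps F ∧ p.2 ∈ comps F := by
    intro F p hp
    constructor
    · exact List.mem_append.mpr (Or.inl (List.mem_map.mpr ⟨p, hp, rfl⟩))
    · exact List.mem_append.mpr (Or.inr (List.mem_map.mpr ⟨p, hp, rfl⟩))
  set nmF : List M := (Nm₄ ++ [eM']) ++ (comps L₆ ++ comps K₆ ++ comps L₈ ++ comps K₈) with hnmF
  have hnmF₄ : ∀ y ∈ Nm₄, y ∈ nmF := fun y hy =>
    List.mem_append.mpr (Or.inl (List.mem_append.mpr (Or.inl hy)))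
  have hmemL₆ : ∀ p ∈ L₆, p.1 ∈ nmF ∧ p.2 ∈ nmF := fun p hp =>
    ⟨List.mem_append.mpr (Or.inr (List.mem_append.mpr (Or.inl (List.mem_append.mpr (Or.inl
      (List.mem_append.mpr (Or.inl (hcomp_mem L₆ p hp).1))))))),
     List.mem_append.mpr (Or.inr (List.mem_append.mpr (Or.inl (List.mem_append.mpr (Or.inl
      (List.mem_append.mpr (Or.inl (hcomp_mem L₆ p hp).2)))))))⟩
  have hmemK₆ : ∀ p ∈ K₆, p.1 ∈ nmF ∧ p.2 ∈ nmF := fun p hp =>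
    ⟨List.mem_append.mpr (Or.inr (List.mem_append.mpr (Or.inl (List.mem_append.mpr (Or.inl
      (List.mem_append.mpr (Or.inr (hcomp_mem K₆ p hp).1))))))),
     List.mem_append.mpr (Or.inr (List.mem_append.mpr (Or.inl (List.mem_append.mpr (Or.inl
      (List.mem_append.mpr (Or.inr (hcomp_mem K₆ p hp).2)))))))⟩
  have hmemL₈ : ∀ p ∈ L₈, p.1 ∈ nmF ∧ p.2 ∈ nmF := fun p hp =>
    ⟨List.mem_append.mpr (Or.inr (List.mem_append.mpr (Or.inl (List.mem_append.mpr (Or.inr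
      (hcomp_mem L₈ p hp).1))))),
     List.mem_append.mpr (Or.inr (List.mem_append.mpr (Or.inl (List.mem_append.mpr (Or.inr
      (hcomp_mem L₈ p hp).2)))))⟩
  have hmemK₈ : ∀ p ∈ K₈, p.1 ∈ nmF ∧ p.2 ∈ nmF := fun p hp =>
    ⟨List.mem_append.mpr (Or.inr (List.mem_append.mpr (Or.inr (hcomp_mem K₈ p hp).1))),
     List.mem_append.mpr (Or.inr (List.mem_append.mpr (Or.inr (hcomp_mem K₈ p hp).2)))⟩
  refine ⟨⟨L₆, K₆, L₈, K₈, nmF, eP', eM'⟩, ?_, ?_, ?_, ?_, ?_, ?_, ?_, ?_, ?_, ?_, ?_, ?_, ?_, ?_, ?_, ?_, ?_, ?_, ?_, ?_⟩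
  · -- StInv
    refine ⟨hisoL₆, hisoK₆, hisoL₈, hisoK₈, hmemL₆, hmemK₆, hmemL₈, hmemK₈,
      hnmF₄ eP' hePNm₄,
      List.mem_append.mpr (Or.inl (List.mem_append.mpr (Or.inr (List.mem_singleton.mpr rfl)))),
      ?_, ?_, ?_, ?_, Or.inl heM'eP'⟩
    · -- t1
      intro p hp
      rcases hcharL₆ p hp with hp' | hp'
      · rcases hcharL₅ p hp' with hp'' | hp''
        · exact t1cur p hp''
        · exact hp''.2 eP' (List.mem_singleton.mpr rfl)
      · rw [hp']; exact hxeP'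
    · -- t2
      intro p hp
      rcases hcharK₆ p hp with hp' | hp'
      · rcases hcharK₅ p hp' with hp'' | hp''
        · exact t2cur p hp''
        · exact hp''.2 eP' (List.mem_singleton.mpr rfl)
      · rw [hp']; exact hxeP'
    · -- b1
      intro p hp
      rcases hcharK₈ p hp with hp' | hp'
      · rcases hcharK₇ p hp' with hp'' | hp''
        · exact b1cur p hp''
        · exact hp''.1 eM' (List.mem_singleton.mpr rfl)
      · rw [hp']; exact heM'x
    · -- b2
      intro p hp
      rcases hcharL₈ p hp with hp' | hp'
      · rcases hcharL₇ p hp' with hp'' | hp''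
        · exact b2cur p hp''
        · exact hp''.1 eM' (List.mem_singleton.mpr rfl)
      · rw [hp']; exact heM'x
  · exact fun q hq => hL56 (hL45 (hb4 (ha1 hq)))
  · exact fun q hq => hK56 (hK45 (ha4 (hb1 hq)))
  · exact fun q hq => hL78 (hL37 (hb3 (ha2 hq)))
  · exact fun q hq => hK78 (hK37 (ha3 (hb2 hq)))
  · exact fun y hy => hnmF₄ y (hn4 (hNm₂₃ (hNm₁₂ (hNm₀₁ (hnm₀ hy)))))
  · -- forward trace
    refine ⟨w, v₁, p₁, v₂, w₂, v₃, p₂, ?_, ?_, ?_, ?_, ?_, ?_, ?_, ?_⟩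
    · exact hL56 (hL45 (hb4 hq11))
    · exact hL56 (hL45 (hb4 hq12))
    · exact hK56 (hK45 (ha4 hq13))
    · exact hK56 (hK45 (ha4 hq14))
    · exact hL78 (hL37 (hb3 hq21))
    · exact hL78 (hL37 (hb3 hq22))
    · exact hK78 (hK37 (ha3 hq23))
    · exact hK78 (hK37 (ha3 hq24))
  · -- backward trace
    refine ⟨wb₁, u₁, pb₂, u₂, wb₃, u₃, pb₄, ?_, ?_, ?_, ?_, ?_, ?_, ?_, ?_⟩
    · exact hK78 (hK37 hq31)
    · exact hK78 (hK37 hq32)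
    · exact hL78 (hL37 hq33)
    · exact hL78 (hL37 hq34)
    · exact hK56 (hK45 hq41)
    · exact hK56 (hK45 hq42)
    · exact hL56 (hL45 hq43)
    · exact hL56 (hL45 hq44)
  · exact hxeP'
  · exact heM'x
  · exact hePeP'
  · exact heM'eM
  · obtain ⟨y, hy⟩ := hLdom; exact ⟨y, hL56 hy⟩
  · exact hLran
  · obtain ⟨y, hy⟩ := hKdom; exact ⟨y, hK56 hy⟩
  · exact hKran
  · obtain ⟨y, hy⟩ := hL'dom; exact ⟨y, hL78 hy⟩
  · exact hL'ran
  · obtain ⟨y, hy⟩ := hK'dom; exact ⟨y, hK78 hy⟩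
  · exact hK'ran

end Stage
section Limit

variable {n : ℕ} {M : Type*} {L : NLinear n M}

/-- The union of an increasing chain of finite partial isomorphisms which is total and
cototal defines an automorphism. -/
lemma limitPerm (m : Fin n) (G : ℕ → List (M × M)) (hiso : ∀ s, IsoList L (G s))
    (hmono : ∀ s, G s ⊆ G (s + 1))
    (htot : ∀ x, ∃ s y, (x, y) ∈ G s) (hcot : ∀ y, ∃ s x, (x, y) ∈ G s) :
    ∃ φ : Equiv.Perm M, (φ ∈ L.aut) ∧ ∀ s, ∀ p ∈ G s, φ p.1 = p.2 := by
  classical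
  have hmono' : ∀ s t, s ≤ t → G s ⊆ G t := by
    intro s t hst
    induction hst with
    | refl => exact List.Subset.refl _
    | step _ ih => exact fun q hq => hmono _ (ih hq)
  have hex : ∀ x, ∃ y, ∃ s, (x, y) ∈ G s := by
    intro x
    obtain ⟨s, y, hy⟩ := htot x
    exact ⟨y, s, hy⟩
  set φf : M → M := fun x => Classical.choose (hex x) with hφf
  have hφspec : ∀ x, ∃ s, (x, φf x) ∈ G s := fun x => Classical.choose_spec (hex x)
  have huniq : ∀ s, ∀ p ∈ G s, φf p.1 = p.2 := by
    intro s p hp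
    obtain ⟨t, ht⟩ := hφspec p.1
    have h1 : (p.1, φf p.1) ∈ G (max s t) := hmono' t _ (le_max_right s t) ht
    have h2 : p ∈ G (max s t) := hmono' s _ (le_max_left s t) hp
    exact IsoList.snd_eq m (hiso (max s t)) h1 h2 rfl
  have hpres : ∀ i a b, L.lt i a b ↔ L.lt i (φf a) (φf b) := by
    intro i a b
    obtain ⟨s, hs⟩ := hφspec a
    obtain ⟨t, ht⟩ := hφspec b
    have h1 : (a, φf a) ∈ G (max s t) := hmono' s _ (le_max_left s t) hs
    have h2 : (b, φf b) ∈ G (max s t) := hmono' t _ (le_max_right s t) ht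
    exact hiso (max s t) (a, φf a) h1 (b, φf b) h2 i
  have hinj : Function.Injective φf := by
    intro a b hab
    rcases L.total m a b with h | h | h
    · exact absurd (hab ▸ (hpres m a b).mp h) (L.irrefl m (φf b))
    · exact h
    · exact absurd (hab ▸ (hpres m b a).mp h) (L.irrefl m (φf b))
  have hsurj : Function.Surjective φf := by
    intro y
    obtain ⟨s, x, hx⟩ := hcot y
    exact ⟨x, huniq s (x, y) hx⟩
  refine ⟨Equiv.ofBijective φf ⟨hinj, hsurj⟩, ?_, ?_⟩
  · intro i a b
    exact hpres i a b
  · intro s p hp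
    exact huniq s p hp

end Limit
/-- For `n ≥ 2` and any nontrivial automorphism `g` of a universal
`n`-linear order, the normal closure of `{g}` contains an element with a single
`+`-orbital with respect to `<_m` and an element with a single `−`-orbital with
respect to `<_m`. -/
theorem stmt14 {n : ℕ} (hn : 2 ≤ n) {M : Type*} (L : NLinear n M)
    (hL : IsUniversalNLinear n M L) (m : Fin n) (g : L.aut) (hg : g ≠ 1) :
    (∃ f ∈ Subgroup.normalClosure ({g} : Set L.aut), L.SinglePlus m (f : Equiv.Perm M)) ∧
    (∃ f ∈ Subgroup.normalClosure ({g} : Set L.aut), L.SingleMinus m (f : Equiv.Perm M)) := by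
  classical
  haveI : Countable M := hL.countable
  haveI : Infinite M := hL.infinite
  -- an index different from m
  obtain ⟨j, hj⟩ : ∃ j : Fin n, j ≠ m := by
    by_cases hm : (m : ℕ) = 0
    · refine ⟨⟨1, by omega⟩, fun h => ?_⟩
      have := congrArg Fin.val h
      simp only [hm] at this
      exact one_ne_zero this
    · refine ⟨⟨0, by omega⟩, fun h => ?_⟩
      have := congrArg Fin.val h
      exact hm this.symm
  have hgp : (↑g : Equiv.Perm M) ∈ L.aut := g.2
  have hgne : (↑g : Equiv.Perm M) ≠ 1 := fun h => hg (Subtype.ext h)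
  -- choose the signs via the dichotomies
  obtain ⟨γ₁, hγ₁cl, hup₁⟩ :
      ∃ γ₁ : L.aut, γ₁ ∈ Subgroup.normalClosure ({g} : Set L.aut) ∧
        UpSource L m (↑γ₁ : Equiv.Perm M) := by
    rcases upSource_or hL m j hj hgp hgne with h | h
    · exact ⟨g, Subgroup.subset_normalClosure (Set.mem_singleton g), h⟩
    · refine ⟨g⁻¹, Subgroup.inv_mem _ (Subgroup.subset_normalClosure (Set.mem_singleton g)), ?_⟩
      simpa using h
  have hgpf : (↑g : Equiv.Perm M) ∈ (L.flipAt m).aut := by rw [L.flipAt_aut]; exact hgp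
  obtain ⟨γ₂, hγ₂cl, hup₂⟩ :
      ∃ γ₂ : L.aut, γ₂ ∈ Subgroup.normalClosure ({g} : Set L.aut) ∧
        UpSource (L.flipAt m) m ((↑γ₂ : Equiv.Perm M))⁻¹ := by
    rcases upSource_or (hL.flipAt m) m j hj hgpf hgne with h | h
    · refine ⟨g⁻¹, Subgroup.inv_mem _ (Subgroup.subset_normalClosure (Set.mem_singleton g)), ?_⟩
      simpa using h
    · exact ⟨g, Subgroup.subset_normalClosure (Set.mem_singleton g), h⟩
  have hg₁ : (↑γ₁ : Equiv.Perm M) ∈ L.aut := γ₁.2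
  have hg₂ : (↑γ₂ : Equiv.Perm M) ∈ L.aut := γ₂.2
  -- enumeration and initial state
  obtain ⟨ξ, hξ⟩ := exists_surjective_nat M
  set e₀ : M := ξ 0 with he₀def
  have h₀ : StInv L m (⟨[], [], [], [], [e₀], e₀, e₀⟩ : Stg M) := by
    refine ⟨?_, ?_, ?_, ?_, ?_, ?_, ?_, ?_, ?_, ?_, ?_, ?_, ?_, ?_, Or.inr rfl⟩ <;>
      first
      | exact fun p hp => absurd hp List.not_mem_nil
      | exact List.mem_singleton.mpr rfl
  -- the recursive construction
  have hex : ∀ (Sp : {S : Stg M // StInv L m S}) (s : ℕ),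
      ∃ Sq : {S : Stg M // StInv L m S},
        StepProp L m (↑γ₁) (↑γ₂) Sp.1 Sq.1 (ξ s) := by
    intro Sp s
    obtain ⟨S', h1, h2⟩ := stageStep hL m hg₁ hg₂ hup₁ hup₂ Sp.1 Sp.2 (ξ s)
    exact ⟨⟨S', h1⟩, h2⟩
  choose nxt hnxt using hex
  obtain ⟨seq, hseq0, hstep⟩ :
      ∃ seq : ℕ → {S : Stg M // StInv L m S},
        seq 0 = ⟨⟨[], [], [], [], [e₀], e₀, e₀⟩, h₀⟩ ∧
        ∀ s, StepProp L m (↑γ₁) (↑γ₂) (seq s).1 (seq (s+1)).1 (ξ s) :=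
    ⟨fun k => Nat.rec ⟨⟨[], [], [], [], [e₀], e₀, e₀⟩, h₀⟩ (fun s prev => nxt prev s) k,
      rfl, fun s => hnxt _ s⟩
  -- the four limit automorphisms
  obtain ⟨πL, hπLa, hπLe⟩ := limitPerm m (fun s => (seq s).1.lm)
    (fun s => (seq s).2.isoL) (fun s => (hstep s).subL)
    (fun x => by
      obtain ⟨s, rfl⟩ := hξ x
      obtain ⟨y, hy⟩ := (hstep s).cLd
      exact ⟨s+1, y, hy⟩)
    (fun x => by
      obtain ⟨s, rfl⟩ := hξ x
      obtain ⟨y, hy⟩ := (hstep s).cLr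
      exact ⟨s+1, y, hy⟩)
  obtain ⟨πK', hπK'a, hπK'e⟩ := limitPerm m (fun s => (seq s).1.km')
    (fun s => (seq s).2.isoK') (fun s => (hstep s).subK')
    (fun x => by
      obtain ⟨s, rfl⟩ := hξ x
      obtain ⟨y, hy⟩ := (hstep s).cK'd
      exact ⟨s+1, y, hy⟩)
    (fun x => by
      obtain ⟨s, rfl⟩ := hξ x
      obtain ⟨y, hy⟩ := (hstep s).cK'r
      exact ⟨s+1, y, hy⟩)
  obtain ⟨πL', hπL'a, hπL'e⟩ := limitPerm m (fun s => (seq s).1.lm')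
    (fun s => (seq s).2.isoL') (fun s => (hstep s).subL')
    (fun x => by
      obtain ⟨s, rfl⟩ := hξ x
      obtain ⟨y, hy⟩ := (hstep s).cL'd
      exact ⟨s+1, y, hy⟩)
    (fun x => by
      obtain ⟨s, rfl⟩ := hξ x
      obtain ⟨y, hy⟩ := (hstep s).cL'r
      exact ⟨s+1, y, hy⟩)
  obtain ⟨πK, hπKa, hπKe⟩ := limitPerm m (fun s => (seq s).1.km)
    (fun s => (seq s).2.isoK) (fun s => (hstep s).subK)
    (fun x => by
      obtain ⟨s, rfl⟩ := hξ x
      obtain ⟨y, hy⟩ := (hstep s).cKd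
      exact ⟨s+1, y, hy⟩)
    (fun x => by
      obtain ⟨s, rfl⟩ := hξ x
      obtain ⟨y, hy⟩ := (hstep s).cKr
      exact ⟨s+1, y, hy⟩)
  -- the element of the normal closure
  set f : L.aut := (⟨πK, hπKa⟩ * γ₁ * ⟨πK, hπKa⟩⁻¹) * (⟨πL', hπL'a⟩ * γ₂ * ⟨πL', hπL'a⟩⁻¹) *
    (⟨πK', hπK'a⟩ * γ₁ * ⟨πK', hπK'a⟩⁻¹) * (⟨πL, hπLa⟩ * γ₂ * ⟨πL, hπLa⟩⁻¹) with hfdef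
  have hN : (Subgroup.normalClosure ({g} : Set L.aut)).Normal := Subgroup.normalClosure_normal
  have hfcl : f ∈ Subgroup.normalClosure ({g} : Set L.aut) := by
    exact Subgroup.mul_mem _ (Subgroup.mul_mem _ (Subgroup.mul_mem _
      (hN.conj_mem _ hγ₁cl _) (hN.conj_mem _ hγ₂cl _)) (hN.conj_mem _ hγ₁cl _))
      (hN.conj_mem _ hγ₂cl _)
  have hFap : ∀ x : M, (↑f : Equiv.Perm M) x =
      πK ((↑γ₁ : Equiv.Perm M) (πK⁻¹ (πL' ((↑γ₂ : Equiv.Perm M) (πL'⁻¹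
        (πK' ((↑γ₁ : Equiv.Perm M) (πK'⁻¹ (πL ((↑γ₂ : Equiv.Perm M) (πL⁻¹ x))))))))))) :=
    fun x => rfl
  have hinvap : ∀ (π : Equiv.Perm M) (a b : M), π a = b → π⁻¹ b = a := by
    intro π a b h
    rw [← h]; exact Equiv.symm_apply_apply π a
  -- forward orbit steps
  have hfE : ∀ s, (↑f : Equiv.Perm M) ((seq s).1.eP) = (seq (s+1)).1.eP := by
    intro s
    obtain ⟨w, v₁, p₁, v₂, w₂, v₃, p₂, h1, h2, h3, h4, h5, h6, h7, h8⟩ := (hstep s).ftrace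
    rw [hFap]
    rw [hinvap πL w _ (hπLe (s+1) _ h1)]
    rw [show πL ((↑γ₂ : Equiv.Perm M) w) = v₁ from hπLe (s+1) _ h2]
    rw [hinvap πK' p₁ _ (hπK'e (s+1) _ h3)]
    rw [show πK' ((↑γ₁ : Equiv.Perm M) p₁) = v₂ from hπK'e (s+1) _ h4]
    rw [hinvap πL' w₂ _ (hπL'e (s+1) _ h5)]
    rw [show πL' ((↑γ₂ : Equiv.Perm M) w₂) = v₃ from hπL'e (s+1) _ h6]
    rw [hinvap πK p₂ _ (hπKe (s+1) _ h7)]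
    exact hπKe (s+1) _ h8
  -- backward orbit steps
  have hbE : ∀ s, (↑f : Equiv.Perm M) ((seq (s+1)).1.eM) = (seq s).1.eM := by
    intro s
    obtain ⟨wb₁, u₁, pb₂, u₂, wb₃, u₃, pb₄, h1, h2, h3, h4, h5, h6, h7, h8⟩ := (hstep s).btrace
    rw [hFap]
    rw [hinvap πL _ _ (hπLe (s+1) _ h8)]
    rw [show ∀ (σ : Equiv.Perm M) (y : M), σ (σ⁻¹ y) = y from fun σ y => Equiv.apply_symm_apply σ y]
    rw [show πL pb₄ = u₃ from hπLe (s+1) _ h7]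
    rw [hinvap πK' _ _ (hπK'e (s+1) _ h6)]
    rw [show ∀ (σ : Equiv.Perm M) (y : M), σ (σ⁻¹ y) = y from fun σ y => Equiv.apply_symm_apply σ y]
    rw [show πK' wb₃ = u₂ from hπK'e (s+1) _ h5]
    rw [hinvap πL' _ _ (hπL'e (s+1) _ h4)]
    rw [show ∀ (σ : Equiv.Perm M) (y : M), σ (σ⁻¹ y) = y from fun σ y => Equiv.apply_symm_apply σ y]
    rw [show πL' pb₂ = u₁ from hπL'e (s+1) _ h3]
    rw [hinvap πK _ _ (hπKe (s+1) _ h2)]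
    rw [show ∀ (σ : Equiv.Perm M) (y : M), σ (σ⁻¹ y) = y from fun σ y => Equiv.apply_symm_apply σ y]
    exact hπKe (s+1) _ h1
  have hbE' : ∀ s, ((↑f : Equiv.Perm M))⁻¹ ((seq s).1.eM) = (seq (s+1)).1.eM :=
    fun s => hinvap _ _ _ (hbE s)
  have hE0 : (seq 0).1.eP = e₀ := by rw [hseq0]
  have hEm0 : (seq 0).1.eM = e₀ := by rw [hseq0]
  -- powers
  have hpow : ∀ s : ℕ, ((↑f : Equiv.Perm M) ^ s) e₀ = (seq s).1.eP := by
    intro s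
    induction s with
    | zero => rw [pow_zero]; exact hE0.symm
    | succ s ih =>
      rw [pow_succ', Equiv.Perm.mul_apply, ih]
      exact hfE s
  have hpowm : ∀ s : ℕ, (((↑f : Equiv.Perm M))⁻¹ ^ s) e₀ = (seq s).1.eM := by
    intro s
    induction s with
    | zero => rw [pow_zero]; exact hEm0.symm
    | succ s ih =>
      rw [pow_succ', Equiv.Perm.mul_apply, ih]
      exact hbE' s
  -- unboundedness of the orbit
  have hup : ∀ x : M, ∃ k : ℤ, L.lt m x (((↑f : Equiv.Perm M) ^ k) e₀) := by
    intro x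
    obtain ⟨s, rfl⟩ := hξ x
    refine ⟨((s+1 : ℕ) : ℤ), ?_⟩
    rw [zpow_natCast, hpow (s+1)]
    exact (hstep s).xhi
  have hdn : ∀ x : M, ∃ k : ℤ, L.lt m (((↑f : Equiv.Perm M) ^ k) e₀) x := by
    intro x
    obtain ⟨s, rfl⟩ := hξ x
    refine ⟨-((s+1 : ℕ) : ℤ), ?_⟩
    rw [zpow_neg, zpow_natCast, ← inv_pow, hpowm (s+1)]
    exact (hstep s).xlo
  constructor
  · refine ⟨f, hfcl, e₀, ?_, hup, hdn⟩
    have h1 : (↑f : Equiv.Perm M) e₀ = (seq 1).1.eP := by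
      rw [← hE0]; exact hfE 0
    rw [h1, ← hE0]
    exact (hstep 0).up
  · refine ⟨f⁻¹, Subgroup.inv_mem _ hfcl, e₀, ?_, ?_, ?_⟩
    · have h1 : (↑f⁻¹ : Equiv.Perm M) e₀ = (seq 1).1.eM := by
        rw [← hEm0]
        exact hbE' 0
      rw [h1, ← hEm0]
      exact (hstep 0).dn
    · intro x
      obtain ⟨s, rfl⟩ := hξ x
      refine ⟨-((s+1 : ℕ) : ℤ), ?_⟩
      have hcoe : (↑f⁻¹ : Equiv.Perm M) = ((↑f : Equiv.Perm M))⁻¹ := rfl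
      rw [hcoe, zpow_neg, zpow_natCast, ← inv_pow, inv_inv, hpow (s+1)]
      exact (hstep s).xhi
    · intro x
      obtain ⟨s, rfl⟩ := hξ x
      refine ⟨((s+1 : ℕ) : ℤ), ?_⟩
      have hcoe : (↑f⁻¹ : Equiv.Perm M) = ((↑f : Equiv.Perm M))⁻¹ := rfl
      rw [hcoe, zpow_natCast, hpowm (s+1)]
      exact (hstep s).xlo
end

section
/- Let g ∈ Aut(ℚ, ≤) satisfy g a < a for every a ∈ ℚ. Let X and B be finite subsets of ℚ and let b_1, …, b_l ∈ ℚ with no entry in X. Then there exist a_1, …, a_l ∈ ℚ realizing the same quantifier-free order type over X as b_1, …, b_l (for all s, t: a_s < a_t iff b_s < b_t, and for every x ∈ X: a_s < x iff b_s < x; in particular no a_s lies in X) such that: (1) {a_1, …, a_l} is independent from B over X, i.e., for every s and every c ∈ B with c ∉ X, if a_s < c then there exists x ∈ X with a_s < x < c; and (2) whenever a_s ≤ g a_t for some s, t, there exists x ∈ X with a_s ≤ x ≤ g a_t. -/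
/-- The automorphism group of `(ℚ, ≤)`, as a subgroup of `Equiv.Perm ℚ`. -/
def QAut : Subgroup (Equiv.Perm ℚ) where
  carrier := {g | ∀ a b : ℚ, a ≤ b ↔ g a ≤ g b}
  one_mem' := fun _ _ => Iff.rfl
  mul_mem' := by
    intro g h hg hh a b
    exact (hh a b).trans (hg (h a) (h b))
  inv_mem' := by
    intro g hg a b
    simpa using (hg (g⁻¹ a) (g⁻¹ b)).symm

/-- `f` has a single `+`-orbital: there is `a` with `a < f a` whose orbit
`{f^k a : k ∈ ℤ}` is unbounded above and below in `ℚ`. -/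
def SinglePlusQ (f : Equiv.Perm ℚ) : Prop :=
  ∃ a : ℚ, a < f a ∧ (∀ x : ℚ, ∃ k : ℤ, x < (f ^ k) a) ∧ (∀ x : ℚ, ∃ k : ℤ, (f ^ k) a < x)

/-- `f` has a single `−`-orbital: there is `a` with `f a < a` whose orbit
`{f^k a : k ∈ ℤ}` is unbounded above and below in `ℚ`. -/
def SingleMinusQ (f : Equiv.Perm ℚ) : Prop :=
  ∃ a : ℚ, f a < a ∧ (∀ x : ℚ, ∃ k : ℤ, x < (f ^ k) a) ∧ (∀ x : ℚ, ∃ k : ℤ, (f ^ k) a < x)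

/-- `f` has a `+`-orbital unbounded above. -/
def PlusUnbAboveQ (f : Equiv.Perm ℚ) : Prop :=
  ∃ a : ℚ, a < f a ∧ ∀ x : ℚ, ∃ k : ℤ, x < (f ^ k) a

/-- `f` has a `−`-orbital unbounded below. -/
def MinusUnbBelowQ (f : Equiv.Perm ℚ) : Prop :=
  ∃ b : ℚ, f b < b ∧ ∀ x : ℚ, ∃ k : ℤ, (f ^ k) b < x

/-! Place the points one at a time, from the largest down. Each new point goes into the cut of `X`
of the original point, below the points already placed and outside `B`, and above every element of
`B \ X` and every `g`-image of a placed point that is not already bounded below by a placed point or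
by an element of `X` to its right. Since `g a < a`, a pair `a ≤ g a'` with `a` new is then either
witnessed by such an element of `X` or reduced to a pair of earlier points. -/

section

variable {α : Type*} [LinearOrder α]

theorem exists_between_finset_notMem [DenselyOrdered α] [NoMinOrder α] [NoMaxOrder α]
    [Nonempty α] (L U A : Finset α) (hLU : ∀ l ∈ L, ∀ u ∈ U, l < u) :
    ∃ a ∉ A, (∀ l ∈ L, l < a) ∧ ∀ u ∈ U, a < u := by
  suffices hinf : {a | (∀ l ∈ L, l < a) ∧ ∀ u ∈ U, a < u}.Infinite by
    obtain ⟨a, ha, haA⟩ := (hinf.sdiff A.finite_toSet).nonempty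
    exact ⟨a, haA, ha⟩
  rcases L.eq_empty_or_nonempty with rfl | hL <;> rcases U.eq_empty_or_nonempty with rfl | hU
  · simpa using Set.infinite_univ
  · refine (Set.Iio_infinite (U.min' hU)).mono fun a ha => ⟨by simp, fun u hu => ?_⟩
    exact ha.trans_le (U.min'_le u hu)
  · refine (Set.Ioi_infinite (L.max' hL)).mono fun a ha => ⟨fun l hl => ?_, by simp⟩
    exact (L.le_max' l hl).trans_lt ha
  · refine (Set.Ioo_infinite (hLU _ (L.max'_mem hL) _ (U.min'_mem hU))).mono
      fun a ha => ⟨fun l hl => ?_, fun u hu => ?_⟩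
    · exact (L.le_max' l hl).trans_lt ha.1
    · exact ha.2.trans_le (U.min'_le u hu)

theorem exists_between_finset_notMem_above [DenselyOrdered α] [NoMinOrder α]
    [NoMaxOrder α] [Nonempty α] (L U A Y : Finset α) (hLU : ∀ l ∈ L, ∀ u ∈ U, l < u) :
    ∃ a ∉ A, (∀ l ∈ L, l < a) ∧ (∀ u ∈ U, a < u) ∧ ∀ y ∈ Y, y < a ∨ ∃ u ∈ U, u ≤ y := by
  obtain ⟨a, haA, haL, haU⟩ :=
    exists_between_finset_notMem (L ∪ Y.filter fun y => ∀ u ∈ U, y < u) U A (by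
      simp only [Finset.mem_union, Finset.mem_filter]
      rintro l (hl | ⟨-, hl⟩) u hu
      exacts [hLU l hl u hu, hl u hu])
  refine ⟨a, haA, fun l hl => haL l (Finset.mem_union_left _ hl), haU, fun y hy => ?_⟩
  by_cases hyU : ∀ u ∈ U, y < u
  · exact Or.inl (haL y (Finset.mem_union_right _ (Finset.mem_filter.mpr ⟨hy, hyU⟩)))
  · push Not at hyU
    exact Or.inr hyU

theorem cut_iff_of_between {X : Finset α} {u a : α} (huX : u ∉ X)
    (hgt : ∀ x ∈ X, u < x → a < x) (hlt : ∀ x ∈ X, x < u → x < a) :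
    ∀ x ∈ X, (a < x ↔ u < x) ∧ (x < a ↔ x < u) := by
  intro x hx
  rcases lt_trichotomy u x with h | rfl | h
  · exact ⟨iff_of_true (hgt x hx h) h, iff_of_false (hgt x hx h).not_gt h.not_gt⟩
  · exact absurd hx huX
  · exact ⟨iff_of_false (hlt x hx h).not_gt h.not_gt, iff_of_true (hlt x hx h) h⟩

structure IndepSeparated (X B : Finset α) (g : α → α) (T : Finset α) : Prop where
  notMem : ∀ a ∈ T, a ∉ B
  indep : ∀ a ∈ T, ∀ c ∈ B, c ∉ X → a < c → ∃ x ∈ X, a < x ∧ x < c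
  sep : ∀ a ∈ T, ∀ a' ∈ T, a ≤ g a' → ∃ x ∈ X, a ≤ x ∧ x ≤ g a'

namespace IndepSeparated

variable {X B : Finset α} {g : α → α} {T : Finset α}

theorem empty : IndepSeparated X B g ∅ :=
  ⟨by simp, by simp, by simp⟩

theorem insert (hg : ∀ a, g a < a) (hT : IndepSeparated X B g T) {b : α} (hbT : ∀ a ∈ T, b < a)
    (hbB : b ∉ B)
    (hB : ∀ c ∈ B, c ∉ X → c < b ∨ (∃ x ∈ X, b < x ∧ x ≤ c) ∨ ∃ a ∈ T, a ≤ c)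
    (hgT : ∀ a' ∈ T, g a' < b ∨ (∃ x ∈ X, b < x ∧ x ≤ g a') ∨ ∃ a ∈ T, a ≤ g a') :
    IndepSeparated X B g (insert b T) := by
  refine ⟨?_, ?_, ?_⟩
  · simpa [hbB] using hT.notMem
  · simp only [Finset.mem_insert, forall_eq_or_imp]
    refine ⟨fun c hc hcX hbc => ?_, hT.indep⟩
    rcases hB c hc hcX with hcb | ⟨x, hx, hbx, hxc⟩ | ⟨a, ha, hac⟩
    · exact absurd hbc hcb.not_gt
    · exact ⟨x, hx, hbx, hxc.lt_of_ne (ne_of_mem_of_not_mem hx hcX)⟩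
    · obtain ⟨x, hx, hax, hxc⟩ :=
        hT.indep a ha c hc hcX (hac.lt_of_ne fun h => hT.notMem a ha (h ▸ hc))
      exact ⟨x, hx, (hbT a ha).trans hax, hxc⟩
  · simp only [Finset.mem_insert, forall_eq_or_imp]
    refine ⟨⟨fun h => absurd h (hg b).not_ge, fun a' ha' hba' => ?_⟩,
      fun a ha => ⟨fun h => absurd h ((hg b).trans (hbT a ha)).not_ge, hT.sep a ha⟩⟩
    rcases hgT a' ha' with hgb | ⟨x, hx, hbx, hxg⟩ | ⟨a, ha, hag⟩
    · exact absurd hba' hgb.not_ge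
    · exact ⟨x, hx, hbx.le, hxg⟩
    · obtain ⟨x, hx, hax, hxg⟩ := hT.sep a ha a' ha' hag
      exact ⟨x, hx, (hbT a ha).le.trans hax, hxg⟩

end IndepSeparated

structure IsIndepSeparatedCopy (X B : Finset α) (g : α → α) (S : Finset α) (f : α → α) : Prop where
  strictMonoOn : StrictMonoOn f S
  cut : ∀ u ∈ S, ∀ x ∈ X, (f u < x ↔ u < x) ∧ (x < f u ↔ x < u)
  image : IndepSeparated X B g (S.image f)

namespace IsIndepSeparatedCopy

variable [DenselyOrdered α] [NoMinOrder α] [NoMaxOrder α]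
  {X B : Finset α} {g : α → α} {S : Finset α} {f : α → α}

theorem exists_insert (hg : ∀ a, g a < a) (hf : IsIndepSeparatedCopy X B g S f) {v : α}
    (hvS : ∀ s ∈ S, v < s) (hvX : v ∉ X) :
    ∃ b, IsIndepSeparatedCopy X B g (insert v S) (Function.update f v b) := by
  have : Nonempty α := ⟨v⟩
  set T := S.image f
  set U := X.filter (v < ·) ∪ T
  have hLU : ∀ l ∈ X.filter (· < v), ∀ u ∈ U, l < u := by
    simp only [U, T, Finset.mem_union, Finset.mem_filter, Finset.mem_image]
    rintro l ⟨hl, hlv⟩ u (⟨-, hvu⟩ | ⟨s, hs, rfl⟩)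
    exacts [hlv.trans hvu, ((hf.cut s hs l hl).2).mpr (hlv.trans (hvS s hs))]
  obtain ⟨b, hbBX, hbL, hbU, hbY⟩ :=
    exists_between_finset_notMem_above _ U (B ∪ X) ((B \ X) ∪ T.image g) hLU
  have hbT : ∀ a ∈ T, b < a := fun a ha => hbU a (Finset.mem_union_right _ ha)
  have hbX : ∀ x ∈ X, v < x → b < x := fun x hx hvx =>
    hbU x (Finset.mem_union_left _ (Finset.mem_filter.mpr ⟨hx, hvx⟩))
  have hbounded : ∀ y ∈ (B \ X) ∪ T.image g,
      y < b ∨ (∃ x ∈ X, b < x ∧ x ≤ y) ∨ ∃ a ∈ T, a ≤ y := by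
    intro y hy
    rcases hbY y hy with hyb | ⟨u, hu, huy⟩
    · exact Or.inl hyb
    · rcases Finset.mem_union.mp hu with hu | hu
      · obtain ⟨hu, hvu⟩ := Finset.mem_filter.mp hu
        exact Or.inr (Or.inl ⟨u, hu, hbX u hu hvu, huy⟩)
      · exact Or.inr (Or.inr ⟨u, hu, huy⟩)
  have hfv : ∀ s ∈ S, Function.update f v b s = f s := fun s hs =>
    Function.update_of_ne (hvS s hs).ne' b f
  have himage : (insert v S).image (Function.update f v b) = insert b T := by
    rw [Finset.image_insert, Function.update_self, Finset.image_congr hfv]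
  refine ⟨b, ⟨?_, ?_, ?_⟩⟩
  · rw [Finset.coe_insert, strictMonoOn_insert_iff_of_forall_ge fun s hs => (hvS s hs).le]
    refine ⟨fun s hs _ => ?_, hf.strictMonoOn.congr fun s hs => (hfv s hs).symm⟩
    rw [Function.update_self, hfv s hs]
    exact hbT _ (Finset.mem_image_of_mem f hs)
  · simp only [Finset.mem_insert, forall_eq_or_imp, Function.update_self]
    refine ⟨cut_iff_of_between hvX hbX fun x hx hxv => hbL x (Finset.mem_filter.mpr ⟨hx, hxv⟩),
      fun s hs => hfv s hs ▸ hf.cut s hs⟩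
  · rw [himage]
    refine hf.image.insert hg hbT (fun h => hbBX (Finset.mem_union_left _ h))
      (fun c hc hcX => hbounded c (Finset.mem_union_left _ (Finset.mem_sdiff.mpr ⟨hc, hcX⟩)))
      (fun a' ha' => hbounded _ (Finset.mem_union_right _ (Finset.mem_image_of_mem g ha')))

theorem exists_of_forall_notMem (hg : ∀ a, g a < a) (X B S : Finset α) (hSX : ∀ v ∈ S, v ∉ X) :
    ∃ f, IsIndepSeparatedCopy X B g S f := by
  induction S using Finset.induction_on_min with
  | empty => exact ⟨id, strictMonoOn_id, by simp, by simpa using IndepSeparated.empty⟩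
  | insert v S hvS ih =>
    obtain ⟨f, hf⟩ := ih fun u hu => hSX u (Finset.mem_insert_of_mem hu)
    obtain ⟨b, hb⟩ := hf.exists_insert hg hvS (hSX v (Finset.mem_insert_self v S))
    exact ⟨_, hb⟩

end IsIndepSeparatedCopy

end

/-- Let `g ∈ Aut(ℚ, ≤)` with `g a < a` for all `a`. For finite
`X, B ⊆ ℚ` and a tuple `b` avoiding `X`, there is a tuple `a` with the same
quantifier-free order type over `X` such that `a` is independent from `B` over `X`
and whenever `a s ≤ g (a t)` there is `x ∈ X` with `a s ≤ x ≤ g (a t)`. -/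
theorem stmt15 (g : QAut) (hg : ∀ a : ℚ, (g : Equiv.Perm ℚ) a < a)
    (X B : Finset ℚ) (l : ℕ) (b : Fin l → ℚ) (hb : ∀ s, b s ∉ X) :
    ∃ a : Fin l → ℚ,
      (∀ s t : Fin l, (a s < a t ↔ b s < b t)) ∧
      (∀ s : Fin l, ∀ x ∈ X, (a s < x ↔ b s < x) ∧ (x < a s ↔ x < b s)) ∧
      (∀ s : Fin l, ∀ c ∈ B, c ∉ X → a s < c → ∃ x ∈ X, a s < x ∧ x < c) ∧
      (∀ s t : Fin l, a s ≤ (g : Equiv.Perm ℚ) (a t) →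
        ∃ x ∈ X, a s ≤ x ∧ x ≤ (g : Equiv.Perm ℚ) (a t)) := by
  obtain ⟨f, hf⟩ :=
    IsIndepSeparatedCopy.exists_of_forall_notMem hg X B (Finset.univ.image b) (by simpa using hb)
  have hbS : ∀ s, b s ∈ Finset.univ.image b := fun s =>
    Finset.mem_image_of_mem b (Finset.mem_univ s)
  have hfT : ∀ s, f (b s) ∈ (Finset.univ.image b).image f := fun s =>
    Finset.mem_image_of_mem f (hbS s)
  exact ⟨f ∘ b, fun s t => hf.strictMonoOn.lt_iff_lt (hbS s) (hbS t), fun s => hf.cut _ (hbS s),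
    fun s => hf.image.indep _ (hfT s), fun s t => hf.image.sep _ (hfT s) _ (hfT t)⟩
end

section
/- Let (M, <) be a linear order and R : M → M → Prop an arbitrary binary relation; for finite subsets A, B, C of M define A ⫝_B C to mean: for every a ∈ A \ B and c ∈ C \ B, neither R a c nor R c a holds, and if a < c then there exists b ∈ B with a < b < c. Let A, B, B', C be finite subsets of M with A ∩ B = ∅ and C ∩ B = ∅, suppose A ⫝_{B ∪ B'} C, and suppose that for every b ∈ B \ B' and c ∈ C \ B' with b < c there exists b' ∈ B' with b < b' < c. Then A ⫝_{B'} C. -/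
/-- The ternary independence relation on finite subsets of a linear order `M`
determined by a binary relation `R`: `Indep R A B C` holds iff for every
`a ∈ A \\ B` and `c ∈ C \\ B`, neither `R a c` nor `R c a` holds, and if `a < c`
then some `b ∈ B` satisfies `a < b < c`. -/
def Indep {M : Type*} [LinearOrder M] (R : M → M → Prop) (A B C : Finset M) : Prop :=
  ∀ a ∈ A, a ∉ B → ∀ c ∈ C, c ∉ B →
    (¬ R a c ∧ ¬ R c a) ∧ (a < c → ∃ b ∈ B, a < b ∧ b < c)

theorem exists_mem_between_of_mem_union {M : Type*} [Preorder M] [DecidableEq M]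
    {B B' : Finset M} {a c : M}
    (hc : ∀ b ∈ B, b ∉ B' → b < c → ∃ b' ∈ B', b < b' ∧ b' < c)
    (h : ∃ b ∈ B ∪ B', a < b ∧ b < c) : ∃ b' ∈ B', a < b' ∧ b' < c := by
  obtain ⟨b, hb, hab, hbc⟩ := h
  by_cases hbB' : b ∈ B'
  · exact ⟨b, hbB', hab, hbc⟩
  · obtain ⟨b', hb', hbb', hb'c⟩ := hc b ((Finset.mem_union.mp hb).resolve_right hbB') hbB' hbc
    exact ⟨b', hb', hab.trans hbb', hb'c⟩

/-- If `A ∩ B = ∅`, `C ∩ B = ∅`, `A ⫝_{B ∪ B'} C`, and every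
`b ∈ B \\ B'` and `c ∈ C \\ B'` with `b < c` admit `b' ∈ B'` with `b < b' < c`,
then `A ⫝_{B'} C`. -/
theorem stmt16 {M : Type*} [LinearOrder M] (R : M → M → Prop)
    (A B B' C : Finset M) (hAB : A ∩ B = ∅) (hCB : C ∩ B = ∅)
    (h1 : Indep R A (B ∪ B') C)
    (h2 : ∀ b ∈ B, b ∉ B' → ∀ c ∈ C, c ∉ B' → b < c → ∃ b' ∈ B', b < b' ∧ b' < c) :
    Indep R A B' C := by
  intro a ha haB' c hc hcB'
  have haB : a ∉ B := Finset.disjoint_left.mp (Finset.disjoint_iff_inter_eq_empty.mpr hAB) ha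
  have hcB : c ∉ B := Finset.disjoint_left.mp (Finset.disjoint_iff_inter_eq_empty.mpr hCB) hc
  obtain ⟨hR, hbetween⟩ :=
    h1 a ha (Finset.notMem_union.mpr ⟨haB, haB'⟩) c hc (Finset.notMem_union.mpr ⟨hcB, hcB'⟩)
  exact ⟨hR, fun hac =>
    exists_mem_between_of_mem_union (fun b hb hbB' => h2 b hb hbB' c hc hcB') (hbetween hac)⟩
end

section
/- Let (α, ≤) be a linear order and let f and f' be order-automorphisms of α, each having a single +-orbital. Then: (i) the composition f' ∘ f has a single +-orbital; and (ii) for every order-automorphism h of α, the conjugate h ∘ f ∘ h⁻¹ has a single +-orbital. Consequently, any product of conjugates of order-automorphisms each having a single +-orbital has a single +-orbital; the analogous statements hold for single −-orbitals. -/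
/-!
An automorphism with a single `+`-orbital moves every point up, so `f ≤ f' ∘ f` pointwise; the
larger map then carries the forward orbit of `a` at least as high and the backward orbit at
least as low, so both stay unbounded. Conjugating by `h` carries the orbit of `a` to the orbit
of `h a`. The `−`-orbital statements are the `+`-orbital ones for the reversed order.
-/

/-- The group of order-automorphisms of a linear order `α`, as a subgroup of
`Equiv.Perm α`. -/
def OrdAut (α : Type*) [LinearOrder α] : Subgroup (Equiv.Perm α) where
  carrier := {g | ∀ a b : α, a ≤ b ↔ g a ≤ g b}
  one_mem' := fun _ _ => Iff.rfl
  mul_mem' := by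
    intro g h hg hh a b
    exact (hh a b).trans (hg (h a) (h b))
  inv_mem' := by
    intro g hg a b
    simpa using (hg (g⁻¹ a) (g⁻¹ b)).symm

/-- `f` has a single `+`-orbital: there is `a` with `a < f a` whose orbit
`{f^k a : k ∈ ℤ}` is unbounded above and below in `α`. -/
def SinglePlusOrbital {α : Type*} [LinearOrder α] (f : Equiv.Perm α) : Prop :=
  ∃ a : α, a < f a ∧ (∀ x : α, ∃ k : ℤ, x < (f ^ k) a) ∧ (∀ x : α, ∃ k : ℤ, (f ^ k) a < x)

/-- `f` has a single `−`-orbital: there is `a` with `f a < a` whose orbit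
`{f^k a : k ∈ ℤ}` is unbounded above and below in `α`. -/
def SingleMinusOrbital {α : Type*} [LinearOrder α] (f : Equiv.Perm α) : Prop :=
  ∃ a : α, f a < a ∧ (∀ x : α, ∃ k : ℤ, x < (f ^ k) a) ∧ (∀ x : α, ∃ k : ℤ, (f ^ k) a < x)

open Equiv

section

variable {α : Type*} [LinearOrder α] {f g h : Perm α}

theorem strictMono_of_mem_ordAut (hf : f ∈ OrdAut α) : StrictMono f :=
  (OrderEmbedding.ofMapLEIff f fun a b => (hf a b).symm).strictMono

theorem strictMono_zpow_apply (hf : f ∈ OrdAut α) {a : α} (ha : a < f a) :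
    StrictMono fun k : ℤ => (f ^ k) a :=
  strictMono_int_of_lt_succ fun k => by
    rw [zpow_add_one, Perm.mul_apply]
    exact strictMono_of_mem_ordAut (zpow_mem hf k) ha

theorem SinglePlusOrbital.lt_apply (hf : f ∈ OrdAut α) (hplus : SinglePlusOrbital f) (b : α) :
    b < f b := by
  obtain ⟨a, ha, above, below⟩ := hplus
  by_contra! hb
  obtain ⟨k, hk⟩ := above b
  obtain ⟨m, hm⟩ := below b
  have hmk : m < k := (strictMono_zpow_apply hf ha).lt_iff_lt.mp (hm.trans hk)
  obtain ⟨n, hn⟩ := Int.eq_ofNat_of_zero_le (sub_nonneg.mpr hmk.le)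
  have hf_mono := (strictMono_of_mem_ordAut hf).monotone
  -- Below `b` the iterates of `f` stay below `b`, so the orbit cannot climb past it.
  have : (f ^ k) a ≤ b :=
    calc (f ^ k) a = f^[n] ((f ^ m) a) := by
          rw [Perm.iterate_eq_pow, ← zpow_natCast, ← hn, ← Perm.mul_apply, ← zpow_add,
            sub_add_cancel]
      _ ≤ f^[n] b := hf_mono.iterate n hm.le
      _ ≤ b := hf_mono.antitone_iterate_of_map_le hb (Nat.zero_le n)
  exact this.not_gt hk

theorem SinglePlusOrbital.of_le (hf : f ∈ OrdAut α) (hg : g ∈ OrdAut α) (hfg : ∀ x, f x ≤ g x)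
    (hplus : SinglePlusOrbital f) : SinglePlusOrbital g := by
  obtain ⟨a, ha, above, below⟩ := hplus
  have hpow (n : ℕ) : (f ^ n) a ≤ (g ^ n) a := by
    simpa only [Perm.iterate_eq_pow] using
      (strictMono_of_mem_ordAut hg).monotone.le_iterate_of_le hfg n a
  have hinv (x : α) : g⁻¹ x ≤ f⁻¹ x :=
    (hg _ _).mpr (by simpa using hfg (f⁻¹ x))
  have hpow_inv (n : ℕ) : (g⁻¹ ^ n) a ≤ (f⁻¹ ^ n) a := by
    simpa only [Perm.iterate_eq_pow] using
      (strictMono_of_mem_ordAut (inv_mem hf)).monotone.le_iterate_of_le hinv n a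
  have horbit := (strictMono_zpow_apply hf ha).monotone
  refine ⟨a, ha.trans_le (hfg a), fun x => ?_, fun x => ?_⟩
  · obtain ⟨k, hk⟩ := above x
    refine ⟨k.toNat, ?_⟩
    calc x < (f ^ k) a := hk
      _ ≤ (f ^ (k.toNat : ℤ)) a := horbit (Int.self_le_toNat k)
      _ ≤ (g ^ (k.toNat : ℤ)) a := by simpa only [zpow_natCast] using hpow k.toNat
  · obtain ⟨k, hk⟩ := below x
    refine ⟨-(-k).toNat, ?_⟩
    calc (g ^ (-((-k).toNat : ℤ))) a ≤ (f ^ (-((-k).toNat : ℤ))) a := by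
          simpa only [zpow_neg, zpow_natCast, inv_pow] using hpow_inv (-k).toNat
      _ ≤ (f ^ k) a := horbit (by omega)
      _ < x := hk

theorem SinglePlusOrbital.mul (hf : f ∈ OrdAut α) (hg : g ∈ OrdAut α)
    (hplus_f : SinglePlusOrbital f) (hplus_g : SinglePlusOrbital g) :
    SinglePlusOrbital (g * f) :=
  hplus_f.of_le hf (mul_mem hg hf) fun x => (hplus_g.lt_apply hg (f x)).le

theorem SinglePlusOrbital.conj (hh : h ∈ OrdAut α) (hplus : SinglePlusOrbital f) :
    SinglePlusOrbital (h * f * h⁻¹) := by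
  obtain ⟨a, ha, above, below⟩ := hplus
  have hh_mono := strictMono_of_mem_ordAut hh
  have horbit (k : ℤ) : ((h * f * h⁻¹) ^ k) (h a) = h ((f ^ k) a) := by
    simp [conj_zpow]
  refine ⟨h a, by simpa using hh_mono ha, fun x => ?_, fun x => ?_⟩
  · obtain ⟨k, hk⟩ := above (h⁻¹ x)
    exact ⟨k, by simpa [horbit] using hh_mono hk⟩
  · obtain ⟨k, hk⟩ := below (h⁻¹ x)
    exact ⟨k, by simpa [horbit] using hh_mono hk⟩

theorem mem_ordAut_orderDual (hf : f ∈ OrdAut α) : f ∈ OrdAut αᵒᵈ :=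
  fun a b => hf b a

theorem singleMinusOrbital_iff_orderDual :
    SingleMinusOrbital f ↔ SinglePlusOrbital (α := αᵒᵈ) f :=
  ⟨fun ⟨a, ha, above, below⟩ => ⟨a, ha, below, above⟩,
    fun ⟨a, ha, above, below⟩ => ⟨a, ha, below, above⟩⟩

theorem SingleMinusOrbital.mul (hf : f ∈ OrdAut α) (hg : g ∈ OrdAut α)
    (hminus_f : SingleMinusOrbital f) (hminus_g : SingleMinusOrbital g) :
    SingleMinusOrbital (g * f) :=
  singleMinusOrbital_iff_orderDual.mpr <|
    (singleMinusOrbital_iff_orderDual.mp hminus_f).mul (mem_ordAut_orderDual hf)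
      (mem_ordAut_orderDual hg) (singleMinusOrbital_iff_orderDual.mp hminus_g)

theorem SingleMinusOrbital.conj (hh : h ∈ OrdAut α) (hminus : SingleMinusOrbital f) :
    SingleMinusOrbital (h * f * h⁻¹) :=
  singleMinusOrbital_iff_orderDual.mpr <|
    (singleMinusOrbital_iff_orderDual.mp hminus).conj (mem_ordAut_orderDual hh)

end

/-- In the group of order-automorphisms of a linear order:
(i) the composite of two automorphisms each with a single `+`-orbital has a single
`+`-orbital; (ii) any conjugate of an automorphism with a single `+`-orbital has a
single `+`-orbital; consequently any (nonempty) product of conjugates of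
automorphisms each with a single `+`-orbital has a single `+`-orbital; and the
analogous statements hold for single `−`-orbitals. -/
theorem stmt18 (α : Type*) [LinearOrder α] :
    (∀ f f' : OrdAut α, SinglePlusOrbital (f : Equiv.Perm α) →
      SinglePlusOrbital (f' : Equiv.Perm α) →
      SinglePlusOrbital ((f' * f : OrdAut α) : Equiv.Perm α)) ∧
    (∀ f h : OrdAut α, SinglePlusOrbital (f : Equiv.Perm α) →
      SinglePlusOrbital ((h * f * h⁻¹ : OrdAut α) : Equiv.Perm α)) ∧
    (∀ l : List (OrdAut α), l ≠ [] →
      (∀ x ∈ l, ∃ f h : OrdAut α, SinglePlusOrbital (f : Equiv.Perm α) ∧ x = h * f * h⁻¹) →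
      SinglePlusOrbital ((l.prod : OrdAut α) : Equiv.Perm α)) ∧
    (∀ f f' : OrdAut α, SingleMinusOrbital (f : Equiv.Perm α) →
      SingleMinusOrbital (f' : Equiv.Perm α) →
      SingleMinusOrbital ((f' * f : OrdAut α) : Equiv.Perm α)) ∧
    (∀ f h : OrdAut α, SingleMinusOrbital (f : Equiv.Perm α) →
      SingleMinusOrbital ((h * f * h⁻¹ : OrdAut α) : Equiv.Perm α)) ∧
    (∀ l : List (OrdAut α), l ≠ [] →
      (∀ x ∈ l, ∃ f h : OrdAut α, SingleMinusOrbital (f : Equiv.Perm α) ∧ x = h * f * h⁻¹) →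
      SingleMinusOrbital ((l.prod : OrdAut α) : Equiv.Perm α)) := by
  refine ⟨fun f f' hf hf' => hf.mul f.2 f'.2 hf', fun f h hf => hf.conj h.2,
    fun l hl hconj => ?_, fun f f' hf hf' => hf.mul f.2 f'.2 hf', fun f h hf => hf.conj h.2,
    fun l hl hconj => ?_⟩
  · refine List.prod_induction_nonempty (fun g : OrdAut α => SinglePlusOrbital (g : Perm α))
      (fun a b ha hb => hb.mul b.2 a.2 ha) hl fun x hx => ?_
    obtain ⟨f, h, hf, rfl⟩ := hconj x hx
    exact hf.conj h.2
  · refine List.prod_induction_nonempty (fun g : OrdAut α => SingleMinusOrbital (g : Perm α))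
      (fun a b ha hb => hb.mul b.2 a.2 ha) hl fun x hx => ?_
    obtain ⟨f, h, hf, rfl⟩ := hconj x hx
    exact hf.conj h.2
end
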